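/- arXiv:2604.17170 — 6 statements merged into one kernel-verified Lean document; each statement's English description precedes it below -/
import Mathlib

section
/- Let Z ⊆ S² be a half-zipper with short hair. Then there is an increasing sequence T₁ ⊆ T₂ ⊆ T₃ ⊆ ⋯ of finite trees contained in Z such that Z = ⋃ₙ Tₙ and, for every n, every path component of Z ∖ Tₙ has d₀-diameter less than 1/n. -/
open Set Metric Filter

noncomputable section

/-- The 2-sphere `S²`, realized as the unit sphere in `ℝ³`, with its induced metric `d₀`. -/
abbrev Sph2 : Type := Metric.sphere (0 : EuclideanSpace ℝ (Fin 3)) 1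

/-- The circle `S¹`, realized as the unit sphere in `ℝ²`. -/
abbrev Sph1 : Type := Metric.sphere (0 : EuclideanSpace ℝ (Fin 2)) 1

/-- The closed unit disk in `ℝ²`. -/
abbrev Disk2 : Set (EuclideanSpace ℝ (Fin 2)) := Metric.closedBall 0 1

/-- A (closed) arc: a subset homeomorphic to `[0,1]`. -/
def IsClosedArc {X : Type*} [TopologicalSpace X] (J : Set X) : Prop :=
  Nonempty (J ≃ₜ (Set.Icc (0:ℝ) 1))

/-- A subset homeomorphic to a circle. -/
def IsCircleSubset {X : Type*} [TopologicalSpace X] (C : Set X) : Prop :=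
  Nonempty (C ≃ₜ (Metric.sphere (0 : EuclideanSpace ℝ (Fin 2)) 1 :
    Set (EuclideanSpace ℝ (Fin 2))))

/-- A CaTherine wheel: a continuous surjection `S¹ → S²` mapping every closed arc to a set
homeomorphic to the closed unit disk, with the images of the endpoints of the arc contained in
the topological frontier of the image. -/
def IsCaTherineWheel (f : Sph1 → Sph2) : Prop :=
  Continuous f ∧ Function.Surjective f ∧
    ∀ J : Set Sph1, IsClosedArc J →
      Nonempty ((f '' J) ≃ₜ Disk2) ∧ f '' frontier J ⊆ frontier (f '' J)

/-- An embedded path in `Z`: a continuous injective map `[0,1] → S²` with image in `Z`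
(parametrized as a map `ℝ → S²`, restricted to `[0,1]`). -/
def IsEmbPathIn (Z : Set Sph2) (γ : ℝ → Sph2) : Prop :=
  ContinuousOn γ (Set.Icc 0 1) ∧ Set.InjOn γ (Set.Icc 0 1) ∧ γ '' Set.Icc 0 1 ⊆ Z

/-- A half-zipper: a dense subset `Z ⊆ S²` such that any two distinct points of `Z` are joined
by an embedded path in `Z` which is unique up to reparametrization (i.e. its image is unique),
and every point of `Z` is a cut point (lies in the interior of some embedded path in `Z`). -/
def IsHalfZipper (Z : Set Sph2) : Prop :=
  Dense Z ∧
  (∀ p ∈ Z, ∀ q ∈ Z, p ≠ q →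
    (∃ γ : ℝ → Sph2, IsEmbPathIn Z γ ∧ γ 0 = p ∧ γ 1 = q) ∧
    (∀ γ γ' : ℝ → Sph2, IsEmbPathIn Z γ → γ 0 = p → γ 1 = q →
      IsEmbPathIn Z γ' → γ' 0 = p → γ' 1 = q →
      γ '' Set.Icc 0 1 = γ' '' Set.Icc 0 1)) ∧
  (∀ p ∈ Z, ∃ q ∈ Z, ∃ r ∈ Z, ∃ γ : ℝ → Sph2, IsEmbPathIn Z γ ∧ γ 0 = q ∧ γ 1 = r ∧
    p ∈ γ '' Set.Ioo 0 1)

/-- A finite tree: a compact path-connected subset of `S²` which is a finite union of arcs and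
contains no subset homeomorphic to a circle. -/
def IsFiniteTree (T : Set Sph2) : Prop :=
  IsCompact T ∧ IsPathConnected T ∧
  (∃ (n : ℕ) (A : Fin n → Set Sph2), (∀ i, IsClosedArc (A i)) ∧ T = ⋃ i, A i) ∧
  ∀ C ⊆ T, ¬ IsCircleSubset C

/-- `Z` has short hair: for every `ε > 0` there is a finite tree `T ⊆ Z` such that every path
component of `Z \ T` has diameter less than `ε`. -/
def HasShortHair (Z : Set Sph2) : Prop :=
  ∀ ε > 0, ∃ T ⊆ Z, IsFiniteTree T ∧
    ∀ x ∈ Z \ T, Metric.diam (pathComponentIn (Z \ T) x) < ε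

/-- A ray in `Z`: a continuous injective map `[0,1) → S²` with image in `Z`. -/
def IsRayIn (Z : Set Sph2) (r : ℝ → Sph2) : Prop :=
  ContinuousOn r (Set.Ico 0 1) ∧ Set.InjOn r (Set.Ico 0 1) ∧ r '' Set.Ico 0 1 ⊆ Z

/-- The ray `r` lands at `p`: it extends to a continuous injective map on `[0,1]`
sending `1` to `p`. -/
def RayLandsAt (r : ℝ → Sph2) (p : Sph2) : Prop :=
  ∃ r' : ℝ → Sph2, ContinuousOn r' (Set.Icc 0 1) ∧ Set.InjOn r' (Set.Icc 0 1) ∧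
    Set.EqOn r r' (Set.Ico 0 1) ∧ r' 1 = p
/-! ### Auxiliary material for `statement_1` -/

/-- Every pair of distinct points of `W` is joined by an embedded path inside `W`,
parametrized by a globally continuous map. -/
def GoodSet (W : Set Sph2) : Prop :=
  ∀ x ∈ W, ∀ y ∈ W, x ≠ y → ∃ γ : ℝ → Sph2, Continuous γ ∧ Set.InjOn γ (Set.Icc 0 1) ∧
    γ '' Set.Icc 0 1 ⊆ W ∧ γ 0 = x ∧ γ 1 = y

lemma sph2_bounded (s : Set Sph2) : Bornology.IsBounded s :=
  isBounded_of_compactSpace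

/-- Clamp an embedded path to a globally continuous map agreeing with it on `[0,1]`. -/
lemma exists_clamp {Z : Set Sph2} {γ : ℝ → Sph2} (h : IsEmbPathIn Z γ) :
    ∃ g : ℝ → Sph2, Continuous g ∧ Set.EqOn g γ (Set.Icc 0 1) ∧
      Set.InjOn g (Set.Icc 0 1) ∧ g '' Set.Icc 0 1 = γ '' Set.Icc 0 1 ∧
      g 0 = γ 0 ∧ g 1 = γ 1 := by
  refine ⟨fun t => γ (projIcc (0:ℝ) 1 zero_le_one t), ?_, ?_, ?_, ?_, ?_, ?_⟩
  · exact h.1.restrict.comp continuous_projIcc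
  · intro t ht
    simp only [projIcc_of_mem zero_le_one ht]
  · intro t1 h1 t2 h2 hval
    simp only [projIcc_of_mem zero_le_one h1, projIcc_of_mem zero_le_one h2] at hval
    exact h.2.1 h1 h2 hval
  · apply Set.image_congr
    intro t ht; simp only [projIcc_of_mem zero_le_one ht]
  · simp only [projIcc_of_mem zero_le_one (Set.left_mem_Icc.mpr zero_le_one)]
  · simp only [projIcc_of_mem zero_le_one (Set.right_mem_Icc.mpr zero_le_one)]

/-- Concatenation/shortcutting of two embedded paths: from an embedded path `α` from `x` to `w`
and an embedded path `β` from `w` to `z` with `x ≠ z`, produce an embedded path from `x` to `z`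
inside the union of the images. -/
lemma concat_emb {α β : ℝ → Sph2} (hαc : Continuous α) (hαi : Set.InjOn α (Set.Icc 0 1))
    (hβc : Continuous β) (hβi : Set.InjOn β (Set.Icc 0 1)) (hj : α 1 = β 0)
    (hne : α 0 ≠ β 1) :
    ∃ δ : ℝ → Sph2, Continuous δ ∧ Set.InjOn δ (Set.Icc 0 1) ∧
      δ '' Set.Icc 0 1 ⊆ α '' Set.Icc 0 1 ∪ β '' Set.Icc 0 1 ∧ δ 0 = α 0 ∧ δ 1 = β 1 := by
  classical
  set B : Set Sph2 := β '' Set.Icc 0 1 with hB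
  have hBclosed : IsClosed B := (isCompact_Icc.image hβc).isClosed
  set K : Set ℝ := Set.Icc 0 1 ∩ α ⁻¹' B with hK
  have hKclosed : IsClosed K := isClosed_Icc.inter (hBclosed.preimage hαc)
  have h1K : (1:ℝ) ∈ K := by
    refine ⟨Set.right_mem_Icc.mpr zero_le_one, ?_⟩
    show α 1 ∈ B
    rw [hj]
    exact Set.mem_image_of_mem _ (Set.left_mem_Icc.mpr zero_le_one)
  have hKne : K.Nonempty := ⟨1, h1K⟩
  have hKbdd : BddBelow K := bddBelow_Icc.mono Set.inter_subset_left
  set s : ℝ := sInf K with hs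
  have hsK : s ∈ K := hKclosed.csInf_mem hKne hKbdd
  have hs01 : s ∈ Set.Icc (0:ℝ) 1 := hsK.1
  obtain ⟨u, hu01, hβu⟩ : ∃ u ∈ Set.Icc (0:ℝ) 1, β u = α s := by
    obtain ⟨u, hu, he⟩ := hsK.2
    exact ⟨u, hu, he⟩
  have hmin : ∀ t ∈ Set.Icc (0:ℝ) 1, t < s → α t ∉ B := by
    intro t ht hts hmem
    exact absurd (csInf_le hKbdd ⟨ht, hmem⟩) (not_le.mpr hts)
  by_cases hu1 : u = 1
  · -- the whole of `β` is short-circuited: use `α` up to time `s`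
    have hβ1 : β 1 = α s := by rw [← hu1]; exact hβu
    have hs0 : 0 < s := by
      rcases lt_or_eq_of_le hs01.1 with h | h
      · exact h
      · exfalso; apply hne; rw [hβ1, ← h]
    refine ⟨fun t => α (t * s), hαc.comp (continuous_id.mul continuous_const), ?_, ?_, ?_, ?_⟩
    · intro t1 h1 t2 h2 hval
      have m1 : t1 * s ∈ Set.Icc (0:ℝ) 1 :=
        ⟨mul_nonneg h1.1 hs0.le, le_trans (mul_le_one₀ h1.2 hs0.le hs01.2) le_rfl⟩
      have m2 : t2 * s ∈ Set.Icc (0:ℝ) 1 :=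
        ⟨mul_nonneg h2.1 hs0.le, le_trans (mul_le_one₀ h2.2 hs0.le hs01.2) le_rfl⟩
      have := hαi m1 m2 hval
      exact mul_right_cancel₀ (ne_of_gt hs0) this
    · rintro _ ⟨t, ht, rfl⟩
      exact Or.inl (Set.mem_image_of_mem _
        ⟨mul_nonneg ht.1 hs0.le, mul_le_one₀ ht.2 hs0.le hs01.2⟩)
    · show α (0 * s) = α 0
      rw [zero_mul]
    · show α (1 * s) = β 1
      rw [one_mul, hβ1]
  · have hu1' : u < 1 := lt_of_le_of_ne hu01.2 hu1
    by_cases hs0 : s = 0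
    · -- `α` is short-circuited entirely: use `β` from time `u`
      have hx : α 0 = β u := by rw [hs0] at hβu; exact hβu.symm
      refine ⟨fun t => β (u + t * (1 - u)),
        hβc.comp (continuous_const.add (continuous_id.mul continuous_const)), ?_, ?_, ?_, ?_⟩
      · intro t1 h1 t2 h2 hval
        have m : ∀ t : ℝ, t ∈ Set.Icc (0:ℝ) 1 → u + t * (1 - u) ∈ Set.Icc (0:ℝ) 1 := by
          intro t ht
          constructor
          · have : 0 ≤ t * (1 - u) := mul_nonneg ht.1 (by linarith)
            linarith [hu01.1]
          · nlinarith [ht.2, hu01.1]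
        have := hβi (m _ h1) (m _ h2) hval
        have h1u : (1:ℝ) - u > 0 := by linarith
        nlinarith [this]
      · rintro _ ⟨t, ht, rfl⟩
        refine Or.inr (Set.mem_image_of_mem _ ?_)
        constructor
        · have : 0 ≤ t * (1 - u) := mul_nonneg ht.1 (by linarith)
          linarith [hu01.1]
        · nlinarith [ht.2, hu01.1]
      · show β (u + 0 * (1 - u)) = α 0
        rw [zero_mul, add_zero]; exact hx.symm
      · show β (u + 1 * (1 - u)) = β 1
        congr 1; ring
    · have hs0' : 0 < s := lt_of_le_of_ne hs01.1 (Ne.symm hs0)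
      have h1u : (0:ℝ) < 1 - u := by linarith
      -- genuine concatenation
      refine ⟨fun t => if t ≤ 1/2 then α (s * (2 * t)) else β (u + (2 * t - 1) * (1 - u)),
        ?_, ?_, ?_, ?_, ?_⟩
      · refine Continuous.if_le
          (hαc.comp (continuous_const.mul (continuous_const.mul continuous_id)))
          (hβc.comp (continuous_const.add
            (((continuous_const.mul continuous_id).sub continuous_const).mul continuous_const)))
          continuous_id continuous_const ?_
        intro t ht
        have : t = 1/2 := ht
        subst this
        have e1 : s * (2 * (1/2 : ℝ)) = s := by norm_num
        have e2 : u + (2 * (1/2 : ℝ) - 1) * (1 - u) = u := by norm_num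
        rw [e1, e2, hβu]
      · -- injectivity
        have marg1 : ∀ t : ℝ, t ∈ Set.Icc (0:ℝ) 1 → t ≤ 1/2 → s * (2 * t) ∈ Set.Icc (0:ℝ) 1 := by
          intro t ht ht2
          constructor
          · have := ht.1
            nlinarith
          · nlinarith [hs01.2, ht.1]
        have marg2 : ∀ t : ℝ, t ∈ Set.Icc (0:ℝ) 1 → ¬(t ≤ 1/2) →
            u + (2 * t - 1) * (1 - u) ∈ Set.Icc (0:ℝ) 1 := by
          intro t ht ht2
          push_neg at ht2
          constructor
          · nlinarith [hu01.1]
          · nlinarith [ht.2, hu01.1]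
        have key : ∀ a ∈ Set.Icc (0:ℝ) 1, ∀ b ∈ Set.Icc (0:ℝ) 1, a ≤ 1/2 → ¬(b ≤ 1/2) →
            α (s * (2 * a)) = β (u + (2 * b - 1) * (1 - u)) → False := by
          intro a ha b hb ha2 hb2 heq
          have hmem : α (s * (2 * a)) ∈ B := by
            rw [heq]; exact Set.mem_image_of_mem _ (marg2 b hb hb2)
          have hle : s * (2 * a) ≤ s := by nlinarith [ha.1]
          rcases lt_or_eq_of_le hle with hlt | heqs
          · exact hmin _ (marg1 a ha ha2) hlt hmem
          · have ha12 : a = 1/2 := by nlinarith [ha.1]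
            subst ha12
            have : α s = β (u + (2 * b - 1) * (1 - u)) := by
              rw [← heq]; congr 1; linarith
            have hinj := hβi hu01 (marg2 b hb hb2) (by rw [← this, ← hβu])
            push_neg at hb2
            nlinarith
        intro t1 h1 t2 h2 hval
        by_cases c1 : t1 ≤ 1/2 <;> by_cases c2 : t2 ≤ 1/2
        · simp only [if_pos c1, if_pos c2] at hval
          have := hαi (marg1 _ h1 c1) (marg1 _ h2 c2) hval
          nlinarith
        · simp only [if_pos c1, if_neg c2] at hval
          exact absurd hval (by intro h; exact key t1 h1 t2 h2 c1 c2 h)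
        · simp only [if_neg c1, if_pos c2] at hval
          exact absurd hval.symm (by intro h; exact key t2 h2 t1 h1 c2 c1 h)
        · simp only [if_neg c1, if_neg c2] at hval
          have := hβi (marg2 _ h1 c1) (marg2 _ h2 c2) hval
          nlinarith
      · rintro _ ⟨t, ht, rfl⟩
        by_cases c : t ≤ 1/2
        · simp only [if_pos c]
          refine Or.inl (Set.mem_image_of_mem _ ?_)
          constructor
          · have := ht.1
            nlinarith
          · nlinarith [hs01.2, ht.1]
        · simp only [if_neg c]
          refine Or.inr (Set.mem_image_of_mem _ ?_)
          push_neg at c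
          constructor
          · nlinarith [hu01.1]
          · nlinarith [ht.2, hu01.1]
      · show (if (0:ℝ) ≤ 1/2 then α (s * (2 * 0)) else β (u + (2 * 0 - 1) * (1 - u))) = α 0
        rw [if_pos (by norm_num : (0:ℝ) ≤ 1/2)]
        norm_num
      · show (if (1:ℝ) ≤ 1/2 then α (s * (2 * 1)) else β (u + (2 * 1 - 1) * (1 - u))) = β 1
        rw [if_neg (by norm_num : ¬((1:ℝ) ≤ 1/2))]
        congr 1; ring
/-- The image of `[0,1]` under a continuous map injective on `[0,1]` is a closed arc. -/
lemma isClosedArc_image {γ : ℝ → Sph2} (hc : Continuous γ) (hi : Set.InjOn γ (Set.Icc 0 1)) :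
    IsClosedArc (γ '' Set.Icc 0 1) := by
  let f : (Set.Icc (0:ℝ) 1) → (γ '' Set.Icc 0 1) :=
    fun t => ⟨γ t, Set.mem_image_of_mem _ t.2⟩
  have hbij : Function.Bijective f := by
    constructor
    · intro t1 t2 h
      exact Subtype.ext (hi t1.2 t2.2 (congrArg Subtype.val h))
    · rintro ⟨y, t, ht, rfl⟩
      exact ⟨⟨t, ht⟩, rfl⟩
  have hcont : Continuous f := (hc.comp continuous_subtype_val).subtype_mk _
  exact ⟨(Continuous.homeoOfEquivCompactToT2 (f := Equiv.ofBijective f hbij) hcont).symm⟩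

lemma IsClosedArc.nonempty {A : Set Sph2} (h : IsClosedArc A) : A.Nonempty := by
  obtain ⟨e⟩ := h
  exact ⟨(e.symm ⟨0, Set.left_mem_Icc.mpr zero_le_one⟩ : A), Subtype.coe_prop _⟩

lemma IsClosedArc.isCompact {A : Set Sph2} (h : IsClosedArc A) : IsCompact A := by
  obtain ⟨e⟩ := h
  exact isCompact_iff_compactSpace.mpr (e.symm.compactSpace)

lemma IsClosedArc.isClosed {A : Set Sph2} (h : IsClosedArc A) : IsClosed A :=
  h.isCompact.isClosed

lemma IsClosedArc.goodSet {A : Set Sph2} (h : IsClosedArc A) : GoodSet A := by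
  obtain ⟨e⟩ := h
  intro x hx y hy hxy
  set a : (Set.Icc (0:ℝ) 1) := e ⟨x, hx⟩ with ha
  set b : (Set.Icc (0:ℝ) 1) := e ⟨y, hy⟩ with hb
  have hab : (a : ℝ) ≠ (b : ℝ) := by
    intro hcontr
    exact hxy (congrArg Subtype.val (e.injective (Subtype.ext hcontr)))
  have hc : Continuous fun t : ℝ => ((projIcc (0:ℝ) 1 zero_le_one t : Set.Icc (0:ℝ) 1) : ℝ) :=
    continuous_subtype_val.comp continuous_projIcc
  have hmem : ∀ t : ℝ, (1 - ((projIcc (0:ℝ) 1 zero_le_one t : Set.Icc (0:ℝ) 1) : ℝ)) * a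
      + ((projIcc (0:ℝ) 1 zero_le_one t : Set.Icc (0:ℝ) 1) : ℝ) * b ∈ Set.Icc (0:ℝ) 1 := by
    intro t
    set c : ℝ := ((projIcc (0:ℝ) 1 zero_le_one t : Set.Icc (0:ℝ) 1) : ℝ) with hcc
    have hc01 : c ∈ Set.Icc (0:ℝ) 1 := (projIcc (0:ℝ) 1 zero_le_one t).2
    have := convex_Icc (0:ℝ) 1 a.2 b.2 (by linarith [hc01.2] : (0:ℝ) ≤ 1 - c) hc01.1 (by ring)
    simpa [smul_eq_mul] using this
  let φ : ℝ → (Set.Icc (0:ℝ) 1) := fun t =>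
    ⟨(1 - ((projIcc (0:ℝ) 1 zero_le_one t : Set.Icc (0:ℝ) 1) : ℝ)) * a
      + ((projIcc (0:ℝ) 1 zero_le_one t : Set.Icc (0:ℝ) 1) : ℝ) * b, hmem t⟩
  have hφc : Continuous φ := by
    apply Continuous.subtype_mk
    exact ((continuous_const.sub hc).mul continuous_const).add (hc.mul continuous_const)
  refine ⟨fun t => ((e.symm (φ t) : A) : Sph2),
    continuous_subtype_val.comp (e.symm.continuous.comp hφc), ?_, ?_, ?_, ?_⟩
  · intro t1 h1 t2 h2 hval
    have h1' : φ t1 = φ t2 := e.symm.injective (Subtype.ext hval)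
    have h2' := congrArg Subtype.val h1'
    simp only [φ, projIcc_of_mem zero_le_one h1, projIcc_of_mem zero_le_one h2] at h2'
    have : (t1 - t2) * ((b : ℝ) - (a : ℝ)) = 0 := by ring_nf; ring_nf at h2'; linarith
    rcases mul_eq_zero.mp this with h | h
    · linarith
    · exact absurd (by linarith : (a:ℝ) = (b:ℝ)) hab
  · rintro _ ⟨t, ht, rfl⟩
    exact Subtype.coe_prop _
  · show ((e.symm (φ 0) : A) : Sph2) = x
    have : φ 0 = a := by
      apply Subtype.ext
      simp only [φ, projIcc_of_mem zero_le_one (Set.left_mem_Icc.mpr zero_le_one)]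
      norm_num
    rw [this, ha, e.symm_apply_apply]
  · show ((e.symm (φ 1) : A) : Sph2) = y
    have : φ 1 = b := by
      apply Subtype.ext
      simp only [φ, projIcc_of_mem zero_le_one (Set.right_mem_Icc.mpr zero_le_one)]
      norm_num
    rw [this, hb, e.symm_apply_apply]

lemma GoodSet.union {U V : Set Sph2} (hU : GoodSet U) (hV : GoodSet V)
    (hw : (U ∩ V).Nonempty) : GoodSet (U ∪ V) := by
  obtain ⟨w, hwU, hwV⟩ := hw
  have main : ∀ P Q : Set Sph2, GoodSet P → GoodSet Q → w ∈ P → w ∈ Q →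
      ∀ x ∈ P, ∀ y ∈ Q, x ∉ Q → x ≠ y →
      ∃ γ : ℝ → Sph2, Continuous γ ∧ Set.InjOn γ (Set.Icc 0 1) ∧
        γ '' Set.Icc 0 1 ⊆ P ∪ Q ∧ γ 0 = x ∧ γ 1 = y := by
    intro P Q hP hQ hwP hwQ x hx y hy hxQ hxy
    have hxw : x ≠ w := fun h => hxQ (h ▸ hwQ)
    by_cases hyw : y = w
    · obtain ⟨γ, hc, hi, him, h0, h1⟩ := hP x hx w hwP hxw
      exact ⟨γ, hc, hi, him.trans Set.subset_union_left, h0, by rw [h1, hyw]⟩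
    · obtain ⟨α, hαc, hαi, hαim, hα0, hα1⟩ := hP x hx w hwP hxw
      obtain ⟨β, hβc, hβi, hβim, hβ0, hβ1⟩ := hQ w hwQ y hy (fun h => hyw h.symm)
      obtain ⟨δ, hδc, hδi, hδim, hδ0, hδ1⟩ := concat_emb hαc hαi hβc hβi
        (by rw [hα1, hβ0]) (by rw [hα0, hβ1]; exact hxy)
      refine ⟨δ, hδc, hδi, ?_, by rw [hδ0, hα0], by rw [hδ1, hβ1]⟩
      exact hδim.trans (Set.union_subset_union hαim hβim)
  intro x hx y hy hxy
  rcases hx with hxU | hxV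
  · by_cases hxV : x ∈ V
    · rcases hy with hyU | hyV
      · obtain ⟨γ, hc, hi, him, h0, h1⟩ := hU x hxU y hyU hxy
        exact ⟨γ, hc, hi, him.trans Set.subset_union_left, h0, h1⟩
      · obtain ⟨γ, hc, hi, him, h0, h1⟩ := hV x hxV y hyV hxy
        exact ⟨γ, hc, hi, him.trans Set.subset_union_right, h0, h1⟩
    · rcases hy with hyU | hyV
      · obtain ⟨γ, hc, hi, him, h0, h1⟩ := hU x hxU y hyU hxy
        exact ⟨γ, hc, hi, him.trans Set.subset_union_left, h0, h1⟩
      · exact main U V hU hV hwU hwV x hxU y hyV hxV hxy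
  · by_cases hxU : x ∈ U
    · rcases hy with hyU | hyV
      · obtain ⟨γ, hc, hi, him, h0, h1⟩ := hU x hxU y hyU hxy
        exact ⟨γ, hc, hi, him.trans Set.subset_union_left, h0, h1⟩
      · obtain ⟨γ, hc, hi, him, h0, h1⟩ := hV x hxV y hyV hxy
        exact ⟨γ, hc, hi, him.trans Set.subset_union_right, h0, h1⟩
    · rcases hy with hyU | hyV
      · obtain ⟨γ, hc, hi, him, h0, h1⟩ := main V U hV hU hwV hwU x hxV y hyU hxU hxy
        exact ⟨γ, hc, hi, him.trans (by rw [Set.union_comm]), h0, h1⟩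
      · obtain ⟨γ, hc, hi, him, h0, h1⟩ := hV x hxV y hyV hxy
        exact ⟨γ, hc, hi, him.trans Set.subset_union_right, h0, h1⟩
/-- Accumulating induction: a finite union of closed, nonempty, good sets whose union with a
closed nonempty good set `U` is preconnected, is good. -/
lemma goodSet_accum {ι : Type} [DecidableEq ι] :
    ∀ (k : ℕ) (s : Finset ι) (A : ι → Set Sph2) (U : Set Sph2), s.card = k →
      IsClosed U → U.Nonempty → GoodSet U →
      (∀ i ∈ s, IsClosed (A i) ∧ (A i).Nonempty ∧ GoodSet (A i)) →
      IsPreconnected (U ∪ ⋃ i ∈ s, A i) → GoodSet (U ∪ ⋃ i ∈ s, A i) := by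
  intro k
  induction k with
  | zero =>
    intro s A U hcard _ _ hUg _ _
    rw [Finset.card_eq_zero.mp hcard]
    simpa using hUg
  | succ k ih =>
    intro s A U hcard hUc hUne hUg hA hpre
    by_cases hex : ∃ i ∈ s, (U ∩ A i).Nonempty
    · obtain ⟨i, his, hne⟩ := hex
      have hrw : (U ∪ A i) ∪ ⋃ j ∈ s.erase i, A j = U ∪ ⋃ j ∈ s, A j := by
        conv_rhs => rw [← Finset.insert_erase his]
        rw [Finset.set_biUnion_insert, Set.union_assoc]
      rw [← hrw] at hpre ⊢
      apply ih (s.erase i) A (U ∪ A i)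
      · rw [Finset.card_erase_of_mem his, hcard]
        omega
      · exact hUc.union (hA i his).1
      · exact hUne.mono Set.subset_union_left
      · exact hUg.union (hA i his).2.2 hne
      · intro j hj
        exact hA j (Finset.mem_of_mem_erase hj)
      · exact hpre
    · exfalso
      push_neg at hex
      have hsne : s.Nonempty := Finset.card_pos.mp (by omega)
      obtain ⟨i0, hi0⟩ := hsne
      set V : Set Sph2 := ⋃ i ∈ s, A i with hV
      have hVc : IsClosed V := isClosed_biUnion_finset (fun i hi => (hA i hi).1)
      have hVne : V.Nonempty := by
        obtain ⟨v, hv⟩ := (hA i0 hi0).2.1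
        exact ⟨v, Set.mem_biUnion hi0 hv⟩
      have hdisj : Disjoint U V := by
        rw [Set.disjoint_left]
        intro z hzU hzV
        obtain ⟨i, hi, hzA⟩ := Set.mem_iUnion₂.mp hzV
        exact (Set.eq_empty_iff_forall_notMem.mp (hex i hi)) z ⟨hzU, hzA⟩
      obtain ⟨O1, O2, hO1, hO2, hUO, hVO, hOd⟩ :=
        SeparatedNhds.of_isCompact_isClosed hUc.isCompact hVc hdisj
      obtain ⟨z, hz, hz1, hz2⟩ := hpre O1 O2 hO1 hO2
        (Set.union_subset (hUO.trans Set.subset_union_left) (hVO.trans Set.subset_union_right))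
        ⟨hUne.choose, Or.inl hUne.choose_spec, hUO hUne.choose_spec⟩
        ⟨hVne.choose, Or.inr hVne.choose_spec, hVO hVne.choose_spec⟩
      exact Set.disjoint_left.mp hOd hz1 hz2

/-- A path-connected finite union of closed arcs is good. -/
lemma goodSet_of_arcs {T : Set Sph2} (hT : IsPathConnected T)
    (harc : ∃ (n : ℕ) (A : Fin n → Set Sph2), (∀ i, IsClosedArc (A i)) ∧ T = ⋃ i, A i) :
    GoodSet T := by
  classical
  obtain ⟨n, A, hA, rfl⟩ := harc
  obtain ⟨x, hx, -⟩ := id hT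
  obtain ⟨i0, hi0x⟩ : ∃ i, x ∈ A i := Set.mem_iUnion.mp hx
  have hrw : ⋃ i, A i = A i0 ∪ ⋃ i ∈ Finset.univ.erase i0, A i := by
    ext z
    simp only [Set.mem_iUnion, Set.mem_union, Finset.mem_erase, Finset.mem_univ, and_true,
      exists_prop]
    constructor
    · rintro ⟨i, hi⟩
      by_cases h : i = i0
      · exact Or.inl (h ▸ hi)
      · exact Or.inr ⟨i, h, hi⟩
    · rintro (h | ⟨i, -, hi⟩)
      · exact ⟨i0, h⟩
      · exact ⟨i, hi⟩
  rw [hrw]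
  apply goodSet_accum (Finset.univ.erase i0).card _ A (A i0) rfl
    (hA i0).isClosed (hA i0).nonempty (hA i0).goodSet
    (fun i _ => ⟨(hA i).isClosed, (hA i).nonempty, (hA i).goodSet⟩)
  rw [← hrw]
  exact hT.isConnected.isPreconnected

/-- Finite unions of closed arcs, as a predicate, are closed under union. -/
lemma arcUnion_union {T S : Set Sph2}
    (hT : ∃ (n : ℕ) (A : Fin n → Set Sph2), (∀ i, IsClosedArc (A i)) ∧ T = ⋃ i, A i)
    (hS : ∃ (n : ℕ) (A : Fin n → Set Sph2), (∀ i, IsClosedArc (A i)) ∧ S = ⋃ i, A i) :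
    ∃ (n : ℕ) (A : Fin n → Set Sph2), (∀ i, IsClosedArc (A i)) ∧ T ∪ S = ⋃ i, A i := by
  obtain ⟨m, A, hA, rfl⟩ := hT
  obtain ⟨k, B, hB, rfl⟩ := hS
  refine ⟨m + k, fun i => Sum.elim A B (finSumFinEquiv.symm i), fun i => ?_, ?_⟩
  · rcases h : finSumFinEquiv.symm i with a | b
    · simp only [h, Sum.elim_inl]; exact hA a
    · simp only [h, Sum.elim_inr]; exact hB b
  · rw [finSumFinEquiv.symm.surjective.iUnion_comp
      (fun j => Sum.elim A B j), Set.iUnion_sum]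
    simp

lemma arcUnion_single {C : Set Sph2} (h : IsClosedArc C) :
    ∃ (n : ℕ) (A : Fin n → Set Sph2), (∀ i, IsClosedArc (A i)) ∧ C = ⋃ i, A i :=
  ⟨1, fun _ => C, fun _ => h, (Set.iUnion_const C).symm⟩
/-- In a half-zipper, no subset is homeomorphic to a circle. -/
lemma no_circle {Z : Set Sph2} (hZ : IsHalfZipper Z) : ∀ C ⊆ Z, ¬ IsCircleSubset C := by
  intro C hCZ hcirc
  obtain ⟨e⟩ := hcirc
  -- two circle parametrizations (upper and lower semicircle)
  set c : ℝ → EuclideanSpace ℝ (Fin 2) :=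
    fun θ => (WithLp.equiv 2 (Fin 2 → ℝ)).symm ![Real.cos θ, Real.sin θ] with hc
  set c' : ℝ → EuclideanSpace ℝ (Fin 2) :=
    fun θ => (WithLp.equiv 2 (Fin 2 → ℝ)).symm ![Real.cos θ, -Real.sin θ] with hc'
  have hnorm : ∀ a b : ℝ, a ^ 2 + b ^ 2 = 1 →
      ((WithLp.equiv 2 (Fin 2 → ℝ)).symm ![a, b] : EuclideanSpace ℝ (Fin 2)) ∈
        Metric.sphere (0 : EuclideanSpace ℝ (Fin 2)) 1 := by
    intro a b hab
    rw [mem_sphere_zero_iff_norm, EuclideanSpace.norm_eq]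
    simp only [WithLp.equiv_symm_apply, PiLp.toLp_apply, WithLp.ofLp_toLp]
    rw [Fin.sum_univ_two]
    simp only [Matrix.cons_val_zero, Matrix.cons_val_one, Matrix.head_cons, Real.norm_eq_abs,
      sq_abs]
    rw [hab, Real.sqrt_one]
  have hcmem : ∀ θ, c θ ∈ Metric.sphere (0 : EuclideanSpace ℝ (Fin 2)) 1 := fun θ =>
    hnorm _ _ (by rw [Real.cos_sq_add_sin_sq])
  have hc'mem : ∀ θ, c' θ ∈ Metric.sphere (0 : EuclideanSpace ℝ (Fin 2)) 1 := fun θ =>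
    hnorm _ _ (by rw [neg_pow, neg_one_sq, one_mul, Real.cos_sq_add_sin_sq])
  have hpair : ∀ x y : ℝ → ℝ, Continuous x → Continuous y →
      Continuous (fun θ => ((WithLp.equiv 2 (Fin 2 → ℝ)).symm ![x θ, y θ] :
        EuclideanSpace ℝ (Fin 2))) := by
    intro x y hx hy
    apply Continuous.comp (PiLp.continuous_toLp 2 (fun _ : Fin 2 => ℝ))
    apply continuous_pi
    intro i
    fin_cases i
    · simpa using hx
    · simpa using hy
  have hcoords : ∀ a b a' b' : ℝ,
      ((WithLp.equiv 2 (Fin 2 → ℝ)).symm ![a, b] : EuclideanSpace ℝ (Fin 2)) =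
      (WithLp.equiv 2 (Fin 2 → ℝ)).symm ![a', b'] → a = a' ∧ b = b' := by
    intro a b a' b' h
    have h2 := (WithLp.equiv 2 (Fin 2 → ℝ)).symm.injective h
    exact ⟨congrFun h2 0, congrFun h2 1⟩
  -- the two paths
  set γ₁ : ℝ → Sph2 := fun t => ((e.symm ⟨c (Real.pi * t), hcmem _⟩ : C) : Sph2) with hγ₁
  set γ₂ : ℝ → Sph2 := fun t => ((e.symm ⟨c' (Real.pi * t), hc'mem _⟩ : C) : Sph2) with hγ₂
  have hpimem : ∀ t : ℝ, t ∈ Set.Icc (0:ℝ) 1 → Real.pi * t ∈ Set.Icc 0 Real.pi := by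
    intro t ht
    constructor
    · exact mul_nonneg Real.pi_pos.le ht.1
    · nlinarith [Real.pi_pos, ht.2]
  have hkey : ∀ (f : ℝ → EuclideanSpace ℝ (Fin 2))
      (hf : ∀ θ, f θ ∈ Metric.sphere (0 : EuclideanSpace ℝ (Fin 2)) 1),
      Continuous f → (∀ t1 ∈ Set.Icc (0:ℝ) 1, ∀ t2 ∈ Set.Icc (0:ℝ) 1,
        f (Real.pi * t1) = f (Real.pi * t2) → t1 = t2) →
      Continuous (fun t => ((e.symm ⟨f (Real.pi * t), hf _⟩ : C) : Sph2)) ∧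
      Set.InjOn (fun t => ((e.symm ⟨f (Real.pi * t), hf _⟩ : C) : Sph2)) (Set.Icc 0 1) ∧
      (fun t => ((e.symm ⟨f (Real.pi * t), hf _⟩ : C) : Sph2)) '' Set.Icc 0 1 ⊆ Z := by
    intro f hf hfc hfi
    refine ⟨?_, ?_, ?_⟩
    · apply continuous_subtype_val.comp
      apply e.symm.continuous.comp
      exact Continuous.subtype_mk (hfc.comp (continuous_const.mul continuous_id)) _
    · intro t1 h1 t2 h2 hval
      apply hfi t1 h1 t2 h2
      have := e.symm.injective (Subtype.ext hval)
      exact congrArg Subtype.val this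
    · rintro _ ⟨t, ht, rfl⟩
      exact hCZ (Subtype.coe_prop _)
  have hinj1 : ∀ t1 ∈ Set.Icc (0:ℝ) 1, ∀ t2 ∈ Set.Icc (0:ℝ) 1,
      c (Real.pi * t1) = c (Real.pi * t2) → t1 = t2 := by
    intro t1 h1 t2 h2 h
    have := (hcoords _ _ _ _ h).1
    have := Real.injOn_cos (hpimem t1 h1) (hpimem t2 h2) this
    have hpi := Real.pi_ne_zero
    field_simp at this
    tauto
  have hinj2 : ∀ t1 ∈ Set.Icc (0:ℝ) 1, ∀ t2 ∈ Set.Icc (0:ℝ) 1,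
      c' (Real.pi * t1) = c' (Real.pi * t2) → t1 = t2 := by
    intro t1 h1 t2 h2 h
    have := (hcoords _ _ _ _ h).1
    have := Real.injOn_cos (hpimem t1 h1) (hpimem t2 h2) this
    have hpi := Real.pi_ne_zero
    field_simp at this
    tauto
  obtain ⟨hc1, hi1, hz1⟩ := hkey c hcmem (hpair _ _ Real.continuous_cos Real.continuous_sin) hinj1
  obtain ⟨hc2, hi2, hz2⟩ := hkey c' hc'mem
    (hpair _ _ Real.continuous_cos Real.continuous_sin.neg) hinj2
  -- endpoints
  have hend0 : γ₂ 0 = γ₁ 0 := by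
    simp only [hγ₁, hγ₂]
    congr 2
    apply Subtype.ext
    show c' (Real.pi * 0) = c (Real.pi * 0)
    simp [hc, hc', mul_zero, Real.sin_zero, neg_zero]
  have hend1 : γ₂ 1 = γ₁ 1 := by
    simp only [hγ₁, hγ₂]
    congr 2
    apply Subtype.ext
    show c' (Real.pi * 1) = c (Real.pi * 1)
    simp [hc, hc', mul_one, Real.sin_pi, neg_zero]
  have hPQ : γ₁ 0 ≠ γ₁ 1 := by
    intro h
    have h1 := e.symm.injective (Subtype.ext h)
    have h2 : c (Real.pi * 0) = c (Real.pi * 1) := congrArg Subtype.val h1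
    have := (hcoords _ _ _ _ h2).1
    rw [mul_zero, mul_one, Real.cos_zero, Real.cos_pi] at this
    norm_num at this
  have hPZ : γ₁ 0 ∈ Z := hCZ (Subtype.coe_prop _)
  have hQZ : γ₁ 1 ∈ Z := hCZ (Subtype.coe_prop _)
  -- uniqueness of embedded paths
  have huniq := (hZ.2.1 (γ₁ 0) hPZ (γ₁ 1) hQZ hPQ).2 γ₁ γ₂
    ⟨hc1.continuousOn, hi1, hz1⟩ rfl rfl
    ⟨hc2.continuousOn, hi2, hz2⟩ hend0 hend1
  -- the top of the circle is on `γ₁` but not on `γ₂`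
  have hmem : γ₁ (1/2) ∈ γ₁ '' Set.Icc 0 1 :=
    Set.mem_image_of_mem _ (by norm_num : (1/2 : ℝ) ∈ Set.Icc (0:ℝ) 1)
  rw [huniq] at hmem
  obtain ⟨t, ht, heq⟩ := hmem
  have h1 := e.symm.injective (Subtype.ext heq)
  have h2 : c' (Real.pi * t) = c (Real.pi * (1/2)) := congrArg Subtype.val h1
  have h3 := (hcoords _ _ _ _ h2).2
  have h4 : Real.pi * (1/2) = Real.pi / 2 := by ring
  rw [h4, Real.sin_pi_div_two] at h3
  have h5 : Real.sin (Real.pi * t) ≥ 0 :=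
    Real.sin_nonneg_of_nonneg_of_le_pi (hpimem t ht).1 (hpimem t ht).2
  linarith
/-- Extend a good finite tree inside a half-zipper to contain another finite tree. -/
lemma tree_extend {Z : Set Sph2} (hZ : IsHalfZipper Z) {T S : Set Sph2}
    (hTZ : T ⊆ Z) (hT : IsFiniteTree T) (hTg : GoodSet T)
    (hSZ : S ⊆ Z) (hS : IsFiniteTree S) :
    ∃ T', T ⊆ T' ∧ S ⊆ T' ∧ T' ⊆ Z ∧ IsFiniteTree T' ∧ GoodSet T' := by
  have hnc := no_circle hZ
  have hSg : GoodSet S := goodSet_of_arcs hS.2.1 hS.2.2.1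
  by_cases hmeet : (T ∩ S).Nonempty
  · refine ⟨T ∪ S, Set.subset_union_left, Set.subset_union_right,
      Set.union_subset hTZ hSZ, ⟨hT.1.union hS.1, hT.2.1.union hS.2.1 hmeet,
        arcUnion_union hT.2.2.1 hS.2.2.1, fun C hC => hnc C (hC.trans (Set.union_subset hTZ hSZ))⟩,
      hTg.union hSg hmeet⟩
  · obtain ⟨x₀, hx₀T, -⟩ := id hT.2.1
    obtain ⟨y₀, hy₀S, -⟩ := id hS.2.1
    have hxy : x₀ ≠ y₀ := fun h => hmeet ⟨x₀, hx₀T, h ▸ hy₀S⟩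
    obtain ⟨γ, hγ, hγ0, hγ1⟩ := (hZ.2.1 x₀ (hTZ hx₀T) y₀ (hSZ hy₀S) hxy).1
    obtain ⟨g, hgc, hgeq, hgi, hgim, hg0, hg1⟩ := exists_clamp hγ
    have hCZ : g '' Set.Icc 0 1 ⊆ Z := by rw [hgim]; exact hγ.2.2
    have hCarc : IsClosedArc (g '' Set.Icc 0 1) := isClosedArc_image hgc hgi
    have hCpc : IsPathConnected (g '' Set.Icc 0 1) :=
      ((convex_Icc (0:ℝ) 1).isPathConnected (Set.nonempty_Icc.mpr zero_le_one)).image hgc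
    have hg1' : g 1 = y₀ := by rw [hg1, hγ1]
    have hg0' : g 0 = x₀ := by rw [hg0, hγ0]
    have hx₀C : x₀ ∈ g '' Set.Icc 0 1 := by
      rw [← hg0']
      exact Set.mem_image_of_mem _ (Set.left_mem_Icc.mpr zero_le_one)
    have hy₀C : y₀ ∈ g '' Set.Icc 0 1 := by
      rw [← hg1']
      exact Set.mem_image_of_mem _ (Set.right_mem_Icc.mpr zero_le_one)
    refine ⟨(T ∪ g '' Set.Icc 0 1) ∪ S, Set.subset_union_left.trans' Set.subset_union_left,
      Set.subset_union_right, ?_, ⟨?_, ?_, ?_, ?_⟩, ?_⟩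
    · exact Set.union_subset (Set.union_subset hTZ hCZ) hSZ
    · exact (hT.1.union (isCompact_Icc.image hgc)).union hS.1
    · exact (hT.2.1.union hCpc ⟨x₀, hx₀T, hx₀C⟩).union hS.2.1 ⟨y₀, Or.inr hy₀C, hy₀S⟩
    · exact arcUnion_union (arcUnion_union hT.2.2.1 (arcUnion_single hCarc)) hS.2.2.1
    · exact fun C hC => hnc C (hC.trans
        (Set.union_subset (Set.union_subset hTZ hCZ) hSZ))
    · exact (hTg.union hCarc.goodSet ⟨x₀, hx₀T, hx₀C⟩).union hSg ⟨y₀, Or.inr hy₀C, hy₀S⟩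
/-- Increasing union.
If `Z ⊆ S²` is a half-zipper with short hair, then `Z` is the union of an increasing sequence
of finite trees `Tₙ ⊆ Z` such that, for every `n ≥ 1`, every path component of `Z \ Tₙ` has
diameter less than `1/n`. -/
theorem statement_1 (Z : Set Sph2) (hZ : IsHalfZipper Z) (hsh : HasShortHair Z) :
    ∃ T : ℕ → Set Sph2, Monotone T ∧ (∀ n, T n ⊆ Z) ∧ (∀ n, IsFiniteTree (T n)) ∧
      Z = ⋃ n, T n ∧
      ∀ n : ℕ, 1 ≤ n → ∀ x ∈ Z \ T n,
        Metric.diam (pathComponentIn (Z \ T n) x) < 1 / (n : ℝ) := by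
  classical
  have hSn : ∀ n : ℕ, ∃ Sn, Sn ⊆ Z ∧ IsFiniteTree Sn ∧
      ∀ x ∈ Z \ Sn, Metric.diam (pathComponentIn (Z \ Sn) x) < 1 / ((n:ℝ)+1) := by
    intro n
    obtain ⟨T, hTZ, htree, hdiam⟩ := hsh (1 / ((n:ℝ)+1)) (by positivity)
    exact ⟨T, hTZ, htree, hdiam⟩
  choose S hSZ hStree hSdiam using hSn
  set P : ℕ → Set Sph2 → Prop :=
    fun n T => S n ⊆ T ∧ T ⊆ Z ∧ IsFiniteTree T ∧ GoodSet T with hPdef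
  have base : P 0 (S 0) :=
    ⟨subset_rfl, hSZ 0, hStree 0, goodSet_of_arcs (hStree 0).2.1 (hStree 0).2.2.1⟩
  have step : ∀ n T, P n T → ∃ T', T ⊆ T' ∧ P (n+1) T' := by
    intro n T hPT
    obtain ⟨T', h1, h2, h3, h4, h5⟩ :=
      tree_extend hZ hPT.2.1 hPT.2.2.1 hPT.2.2.2 (hSZ (n+1)) (hStree (n+1))
    exact ⟨T', h1, h2, h3, h4, h5⟩
  let F : ∀ n : ℕ, {T : Set Sph2 // P n T} := fun n => Nat.rec ⟨S 0, base⟩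
    (fun n prev => ⟨(step n prev.1 prev.2).choose, (step n prev.1 prev.2).choose_spec.2⟩) n
  have hstep : ∀ n : ℕ, (F n).1 ⊆ (F (n+1)).1 :=
    fun n => (step n (F n).1 (F n).2).choose_spec.1
  have hmono : Monotone fun n => (F n).1 := monotone_nat_of_le_succ hstep
  have hFZ : ∀ n, (F n).1 ⊆ Z := fun n => (F n).2.2.1
  have hFtree : ∀ n, IsFiniteTree (F n).1 := fun n => (F n).2.2.2.1
  have hFgood : ∀ n, GoodSet (F n).1 := fun n => (F n).2.2.2.2
  have hFS : ∀ n, S n ⊆ (F n).1 := fun n => (F n).2.1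
  -- small components of the complement
  have hFdiam : ∀ n, ∀ x ∈ Z \ (F n).1,
      Metric.diam (pathComponentIn (Z \ (F n).1) x) < 1 / ((n:ℝ)+1) := by
    intro n x hx
    have hxS : x ∈ Z \ S n := ⟨hx.1, fun h => hx.2 (hFS n h)⟩
    have hsub : pathComponentIn (Z \ (F n).1) x ⊆ pathComponentIn (Z \ S n) x :=
      pathComponentIn_mono (Set.diff_subset_diff_right (hFS n))
    calc Metric.diam (pathComponentIn (Z \ (F n).1) x)
        ≤ Metric.diam (pathComponentIn (Z \ S n) x) :=
          Metric.diam_mono hsub (sph2_bounded _)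
      _ < 1 / ((n:ℝ)+1) := hSdiam n x hxS
  refine ⟨fun n => (F n).1, hmono, hFZ, hFtree, ?_, ?_⟩
  · -- covering
    apply Set.Subset.antisymm
    · intro p hp
      by_contra hnp
      simp only [Set.mem_iUnion, not_exists] at hnp
      obtain ⟨q, hq, r, hr, γ, hγ, hγ0, hγ1, t₀, ht₀, hpt⟩ := hZ.2.2 p hp
      obtain ⟨g, hgc, hgeq, hgi, hgim, hg0, hg1⟩ := exists_clamp hγ
      have ht₀01 : t₀ ∈ Set.Icc (0:ℝ) 1 := ⟨ht₀.1.le, ht₀.2.le⟩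
      -- no tree can meet the image of `γ` on both sides of `t₀`
      have htwo : ∀ n, ∀ s ∈ Set.Icc 0 t₀, ∀ u ∈ Set.Icc t₀ 1,
          γ s ∈ (F n).1 → γ u ∈ (F n).1 → False := by
        intro n s hs u hu hsT huT
        have hs01 : s ∈ Set.Icc (0:ℝ) 1 := ⟨hs.1, hs.2.trans ht₀.2.le⟩
        have hu01 : u ∈ Set.Icc (0:ℝ) 1 := ⟨ht₀.1.le.trans hu.1, hu.2⟩
        rcases eq_or_lt_of_le hs.2 with rfl | hslt
        · exact hnp n (hpt ▸ hsT)
        rcases eq_or_lt_of_le hu.1 with rfl | hult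
        · exact hnp n (hpt ▸ huT)
        have hsu : s < u := hslt.trans hult
        have hne : γ s ≠ γ u := fun h => absurd (hγ.2.1 hs01 hu01 h) (ne_of_lt hsu)
        have hsZ : γ s ∈ Z := hγ.2.2 (Set.mem_image_of_mem _ hs01)
        have huZ : γ u ∈ Z := hγ.2.2 (Set.mem_image_of_mem _ hu01)
        obtain ⟨δ, hδc, hδi, hδim, hδ0, hδ1⟩ := hFgood n (γ s) hsT (γ u) huT hne
        -- reparametrized subpath of `γ` from `γ s` to `γ u`
        set η : ℝ → Sph2 := fun t => g (s + t * (u - s)) with hη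
        have husp : 0 < u - s := by linarith
        have hmemarg : ∀ t : ℝ, t ∈ Set.Icc (0:ℝ) 1 → s + t * (u - s) ∈ Set.Icc (0:ℝ) 1 := by
          intro t ht
          constructor
          · have : 0 ≤ t * (u - s) := mul_nonneg ht.1 husp.le
            linarith [hs01.1]
          · nlinarith [ht.2, hu01.2]
        have hηc : Continuous η := hgc.comp (continuous_const.add
          (continuous_id.mul continuous_const))
        have hηi : Set.InjOn η (Set.Icc 0 1) := by
          intro t1 h1 t2 h2 hval
          have := hgi (hmemarg t1 h1) (hmemarg t2 h2) hval
          nlinarith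
        have hηim : η '' Set.Icc 0 1 ⊆ Z := by
          rintro _ ⟨t, ht, rfl⟩
          rw [show η t = g (s + t * (u - s)) from rfl, hgeq (hmemarg t ht)]
          exact hγ.2.2 (Set.mem_image_of_mem _ (hmemarg t ht))
        have hη0 : η 0 = γ s := by
          show g (s + 0 * (u - s)) = γ s
          rw [zero_mul, add_zero]; exact hgeq hs01
        have hη1 : η 1 = γ u := by
          show g (s + 1 * (u - s)) = γ u
          rw [one_mul, show s + (u - s) = u by ring]; exact hgeq hu01
        have huniq := (hZ.2.1 (γ s) hsZ (γ u) huZ hne).2 η δ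
          ⟨hηc.continuousOn, hηi, hηim⟩ hη0 hη1
          ⟨hδc.continuousOn, hδi, hδim.trans (hFZ n)⟩ hδ0 hδ1
        have hpmem : p ∈ η '' Set.Icc 0 1 := by
          refine ⟨(t₀ - s) / (u - s), ⟨div_nonneg (by linarith) husp.le, ?_⟩, ?_⟩
          · rw [div_le_one husp]; linarith [hu.1]
          · show g (s + (t₀ - s) / (u - s) * (u - s)) = p
            rw [div_mul_cancel₀ _ (ne_of_gt husp), show s + (t₀ - s) = t₀ by ring,
              hgeq ht₀01, hpt]
        rw [huniq] at hpmem
        obtain ⟨t, ht, hteq⟩ := hpmem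
        exact hnp n (hteq ▸ hδim (Set.mem_image_of_mem _ ht))
      by_cases hL : ∃ n, ∃ s ∈ Set.Icc 0 t₀, γ s ∈ (F n).1
      · by_cases hR : ∃ n, ∃ u ∈ Set.Icc t₀ 1, γ u ∈ (F n).1
        · obtain ⟨n1, s, hs, hsT⟩ := hL
          obtain ⟨n2, u, hu, huT⟩ := hR
          exact htwo (max n1 n2) s hs u hu (hmono (le_max_left n1 n2) hsT)
            (hmono (le_max_right n1 n2) huT)
        · -- the whole right tail avoids every tree
          push_neg at hR
          have htail : ∀ n, g '' Set.Icc t₀ 1 ⊆ Z \ (F n).1 := by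
            rintro n _ ⟨u, hu, rfl⟩
            have hu01 : u ∈ Set.Icc (0:ℝ) 1 := ⟨ht₀.1.le.trans hu.1, hu.2⟩
            rw [hgeq hu01]
            exact ⟨hγ.2.2 (Set.mem_image_of_mem _ hu01), hR n u hu⟩
          have hpc : IsPathConnected (g '' Set.Icc t₀ 1) :=
            ((convex_Icc t₀ 1).isPathConnected (Set.nonempty_Icc.mpr ht₀.2.le)).image hgc
          have hpmem : p ∈ g '' Set.Icc t₀ 1 :=
            ⟨t₀, Set.left_mem_Icc.mpr ht₀.2.le, by rw [hgeq ht₀01, hpt]⟩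
          have hrmem : γ 1 ∈ g '' Set.Icc t₀ 1 :=
            ⟨1, Set.right_mem_Icc.mpr ht₀.2.le, hgeq (Set.right_mem_Icc.mpr zero_le_one)⟩
          have hpr : p ≠ γ 1 := by
            intro h
            have := hγ.2.1 ht₀01 (Set.right_mem_Icc.mpr zero_le_one) (by rw [hpt, h])
            exact absurd this (ne_of_lt ht₀.2)
          have hd : 0 < dist p (γ 1) := dist_pos.mpr hpr
          obtain ⟨n, hn⟩ := exists_nat_one_div_lt hd
          have h1 : dist p (γ 1) ≤ Metric.diam (pathComponentIn (Z \ (F n).1) p) :=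
            Metric.dist_le_diam_of_mem (sph2_bounded _)
              (hpc.subset_pathComponentIn hpmem (htail n) hpmem)
              (hpc.subset_pathComponentIn hpmem (htail n) hrmem)
          have h2 := hFdiam n p (htail n hpmem)
          linarith
      · -- the whole left tail avoids every tree
        push_neg at hL
        have htail : ∀ n, g '' Set.Icc 0 t₀ ⊆ Z \ (F n).1 := by
          rintro n _ ⟨s, hs, rfl⟩
          have hs01 : s ∈ Set.Icc (0:ℝ) 1 := ⟨hs.1, hs.2.trans ht₀.2.le⟩
          rw [hgeq hs01]
          exact ⟨hγ.2.2 (Set.mem_image_of_mem _ hs01), hL n s hs⟩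
        have hpc : IsPathConnected (g '' Set.Icc 0 t₀) :=
          ((convex_Icc (0:ℝ) t₀).isPathConnected (Set.nonempty_Icc.mpr ht₀.1.le)).image hgc
        have hpmem : p ∈ g '' Set.Icc 0 t₀ :=
          ⟨t₀, Set.right_mem_Icc.mpr ht₀.1.le, by rw [hgeq ht₀01, hpt]⟩
        have hqmem : γ 0 ∈ g '' Set.Icc 0 t₀ :=
          ⟨0, Set.left_mem_Icc.mpr ht₀.1.le, hgeq (Set.left_mem_Icc.mpr zero_le_one)⟩
        have hpq : p ≠ γ 0 := by
          intro h
          have := hγ.2.1 ht₀01 (Set.left_mem_Icc.mpr zero_le_one) (by rw [hpt, h])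
          exact absurd this (ne_of_gt ht₀.1)
        have hd : 0 < dist p (γ 0) := dist_pos.mpr hpq
        obtain ⟨n, hn⟩ := exists_nat_one_div_lt hd
        have h1 : dist p (γ 0) ≤ Metric.diam (pathComponentIn (Z \ (F n).1) p) :=
          Metric.dist_le_diam_of_mem (sph2_bounded _)
            (hpc.subset_pathComponentIn hpmem (htail n) hpmem)
            (hpc.subset_pathComponentIn hpmem (htail n) hqmem)
        have h2 := hFdiam n p (htail n hpmem)
        linarith
    · exact Set.iUnion_subset fun n => hFZ n
  · -- diameter bound
    intro n hn x hx
    have h1 := hFdiam n x hx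
    have h2 : 1 / ((n:ℝ)+1) < 1 / (n:ℝ) := by
      apply one_div_lt_one_div_of_lt
      · exact_mod_cast Nat.pos_of_ne_zero (by omega)
      · linarith
    linarith
end
end

section
/- Let D be a length metric on ℂ that induces the Euclidean topology and whose closed balls {w : D(z,w) ≤ t} are all compact. Then for every z ∈ ℂ and all real s > t > 0, only finitely many connected components of ℂ ∖ closure(𝓑_t(z)) intersect ℂ ∖ closure(𝓑_s(z)). -/
open Set Metric Filter
open scoped ENNReal

noncomputable section

/-- `D` is a metric on `ℂ`. -/
structure IsMetricOn (D : ℂ → ℂ → ℝ) : Prop where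
  self_dist : ∀ x, D x x = 0
  eq_of_dist_eq_zero : ∀ x y, D x y = 0 → x = y
  symm : ∀ x y, D x y = D y x
  triangle : ∀ x y z, D x z ≤ D x y + D y z

/-- `D` induces the Euclidean topology on `ℂ`. -/
def InducesEuclTop (D : ℂ → ℂ → ℝ) : Prop :=
  (∀ z : ℂ, ∀ ε > (0:ℝ), ∃ δ > (0:ℝ), ∀ w, dist z w < δ → D z w < ε) ∧
  (∀ z : ℂ, ∀ ε > (0:ℝ), ∃ δ > (0:ℝ), ∀ w, D z w < δ → dist z w < ε)

/-- The open `D`-ball `𝓑_t(z)`. -/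
def DBall (D : ℂ → ℂ → ℝ) (z : ℂ) (t : ℝ) : Set ℂ := {w | D z w < t}

/-- A `D`-geodesic from `z` to `w`: a continuous map `σ : [0, D(z,w)] → ℂ` with `σ 0 = z`,
`σ (D z w) = w` and `D (σ t) (σ s) = s - t` for `0 ≤ t ≤ s ≤ D z w`. -/
def IsDGeodesic (D : ℂ → ℂ → ℝ) (z w : ℂ) (σ : ℝ → ℂ) : Prop :=
  σ 0 = z ∧ σ (D z w) = w ∧ ContinuousOn σ (Set.Icc 0 (D z w)) ∧
    ∀ t s : ℝ, 0 ≤ t → t ≤ s → s ≤ D z w → D (σ t) (σ s) = s - t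

/-- A `D`-geodesic from `w` to `∞`: a continuous map `σ : [0,∞) → ℂ` with `σ 0 = w` and
`D (σ t) (σ s) = s - t` for all `0 ≤ t ≤ s`. -/
def IsDGeodesicToInfty (D : ℂ → ℂ → ℝ) (w : ℂ) (σ : ℝ → ℂ) : Prop :=
  σ 0 = w ∧ ContinuousOn σ (Set.Ici 0) ∧
    ∀ t s : ℝ, 0 ≤ t → t ≤ s → D (σ t) (σ s) = s - t

/-- The `D`-geodesic tree `Z_z` rooted at `z`. -/
def geoTree (D : ℂ → ℂ → ℝ) (z : ℂ) : Set ℂ :=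
  {p | ∃ (w : ℂ) (σ : ℝ → ℂ) (t : ℝ), IsDGeodesic D z w σ ∧ 0 ≤ t ∧ t < D z w ∧ σ t = p}

/-- The `D`-geodesic tree `Z_∞` rooted at `∞`. -/
def geoTreeInfty (D : ℂ → ℂ → ℝ) : Set ℂ :=
  {p | ∃ (w : ℂ) (σ : ℝ → ℂ) (t : ℝ), IsDGeodesicToInfty D w σ ∧ 0 < t ∧ σ t = p}

/-- There is exactly one `D`-geodesic from `z` to `x` (it exists, and any two agree on
`[0, D(z,x)]`). -/
def UniqueGeodesic (D : ℂ → ℂ → ℝ) (z x : ℂ) : Prop :=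
  (∃ σ, IsDGeodesic D z x σ) ∧
    ∀ σ σ', IsDGeodesic D z x σ → IsDGeodesic D z x σ' →
      Set.EqOn σ σ' (Set.Icc 0 (D z x))

/-- The `D`-length of the path `γ` on `[a,b]`: the supremum over partitions
`a = t₀ ≤ t₁ ≤ ⋯ ≤ t_n = b` of `Σᵢ D (γ tᵢ) (γ tᵢ₊₁)`, valued in `ℝ≥0∞`. -/
noncomputable def DLength (D : ℂ → ℂ → ℝ) (γ : ℝ → ℂ) (a b : ℝ) : ℝ≥0∞ :=
  sSup {L : ℝ≥0∞ | ∃ (n : ℕ) (P : Fin (n + 1) → ℝ), Monotone P ∧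
    P 0 = a ∧ P (Fin.last n) = b ∧
    L = ∑ i : Fin n, ENNReal.ofReal (D (γ (P i.castSucc)) (γ (P i.succ)))}

/-- `D` is a length metric: `D x y` is the infimum of `D`-lengths of continuous paths
from `x` to `y`. -/
def IsLengthMetric (D : ℂ → ℂ → ℝ) : Prop :=
  ∀ x y : ℂ, ENNReal.ofReal (D x y) =
    sInf {L : ℝ≥0∞ | ∃ γ : ℝ → ℂ, ContinuousOn γ (Set.Icc 0 1) ∧ γ 0 = x ∧ γ 1 = y ∧
      L = DLength D γ 0 1}

/-- Finitely many components across a `D`-annulus.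
If `D` is a length metric on `ℂ` inducing the Euclidean topology with compact closed balls,
then for all `s > t > 0` only finitely many connected components of `ℂ ∖ closure 𝓑_t(z)`
intersect `ℂ ∖ closure 𝓑_s(z)`. -/
theorem statement_5 (D : ℂ → ℂ → ℝ) (hD : IsMetricOn D) (htop : InducesEuclTop D)
    (hlen : IsLengthMetric D) (hcpt : ∀ z t, IsCompact {w | D z w ≤ t})
    (z : ℂ) (t s : ℝ) (ht : 0 < t) (hts : t < s) :
    {C : Set ℂ | (∃ x ∈ (closure (DBall D z t))ᶜ,
        C = connectedComponentIn (closure (DBall D z t))ᶜ x) ∧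
      (C ∩ (closure (DBall D z s))ᶜ).Nonempty}.Finite := by
  classical
  -- continuity of `w ↦ D z w` in the Euclidean topology
  have hf : Continuous (fun w => D z w) := by
    rw [Metric.continuous_iff]
    intro x ε hε
    obtain ⟨δ, hδ, hδ'⟩ := htop.1 x ε hε
    refine ⟨δ, hδ, fun w hw => ?_⟩
    have hxw : D x w < ε := hδ' w (by rwa [dist_comm])
    have h1 : D z w ≤ D z x + D x w := hD.triangle z x w
    have h2 : D z x ≤ D z w + D x w := by
      have h3 := hD.triangle z w x
      rw [hD.symm w x] at h3
      exact h3
    rw [Real.dist_eq, abs_sub_lt_iff]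
    constructor <;> linarith
  set U : Set ℂ := (closure (DBall D z t))ᶜ with hUdef
  have hUopen : IsOpen U := isClosed_closure.isOpen_compl
  -- closed D-balls contain the closures of the open ones
  have hclos : ∀ r : ℝ, closure (DBall D z r) ⊆ {w | D z w ≤ r} := by
    intro r
    exact closure_minimal (fun w hw => show D z w ≤ r from le_of_lt hw)
      (isClosed_le hf continuous_const)
  set m : ℝ := (t + s) / 2 with hmdef
  have htm : t < m := by simp only [hmdef]; linarith
  have hms : m < s := by simp only [hmdef]; linarith
  have hm0 : 0 < m := lt_trans ht htm
  -- a point with `D z · > t` is in `U`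
  have hmemU : ∀ w : ℂ, t < D z w → w ∈ U := fun w hw hmem =>
    absurd (hclos t hmem) (not_le.mpr hw)
  -- key claim: each component in the family contains a point at D-distance exactly m
  have key : ∀ C : Set ℂ, ((∃ x ∈ (closure (DBall D z t))ᶜ,
        C = connectedComponentIn (closure (DBall D z t))ᶜ x) ∧
      (C ∩ (closure (DBall D z s))ᶜ).Nonempty) → ∃ y, y ∈ C ∧ D z y = m := by
    rintro C ⟨⟨x, hxU, rfl⟩, ⟨p, hpC, hps⟩⟩
    have hCp : connectedComponentIn U x = connectedComponentIn U p :=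
      connectedComponentIn_eq hpC
    have hpU : p ∈ U := connectedComponentIn_subset U x hpC
    have hsp : s ≤ D z p := by
      by_contra h
      exact hps (subset_closure (not_le.mp h))
    set g : ℝ → ℂ := fun u => z + (u : ℂ) * (p - z) with hgdef
    have hg : Continuous g := by fun_prop
    have hg0 : g 0 = z := by simp [hgdef]
    have hg1 : g 1 = p := by simp [hgdef]
    set h : ℝ → ℝ := fun u => D z (g u) with hhdef
    have hh : Continuous h := hf.comp hg
    set A : Set ℝ := Icc (0:ℝ) 1 ∩ {u | h u ≤ m} with hAdef
    have hAne : (0:ℝ) ∈ A := by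
      refine ⟨⟨le_refl _, zero_le_one⟩, ?_⟩
      show h 0 ≤ m
      rw [hhdef]; simp only [hg0, hD.self_dist]
      exact le_of_lt hm0
    have hAclosed : IsClosed A := isClosed_Icc.inter (isClosed_le hh continuous_const)
    have hAbdd : BddAbove A := ⟨1, fun u hu => hu.1.2⟩
    set u₀ : ℝ := sSup A with hu₀def
    have hu₀A : u₀ ∈ A := hAclosed.csSup_mem ⟨0, hAne⟩ hAbdd
    have hu₀0 : 0 ≤ u₀ := hu₀A.1.1
    have hu₀1 : u₀ ≤ 1 := hu₀A.1.2
    have hh1 : s ≤ h 1 := by rw [hhdef]; simpa [hg1] using hsp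
    have hu₀ne1 : u₀ ≠ 1 := by
      intro he
      have : h u₀ ≤ m := hu₀A.2
      rw [he] at this
      linarith
    have hu₀lt1 : u₀ < 1 := lt_of_le_of_ne hu₀1 hu₀ne1
    -- on (u₀, 1], h > m
    have hIoc : ∀ u ∈ Ioc u₀ 1, m ≤ h u := by
      intro u hu
      by_contra hc
      have huA : u ∈ A := ⟨⟨le_trans hu₀0 (le_of_lt hu.1), hu.2⟩, le_of_lt (not_le.mp hc)⟩
      exact absurd (le_csSup hAbdd huA) (not_le.mpr hu.1)
    -- h u₀ = m by continuity
    have hu₀ge : m ≤ h u₀ := by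
      have hcl : closure (Ioc u₀ 1) ⊆ {u | m ≤ h u} :=
        closure_minimal hIoc (isClosed_le continuous_const hh)
      have : u₀ ∈ closure (Ioc u₀ 1) := by
        rw [closure_Ioc (ne_of_lt hu₀lt1)]
        exact ⟨le_refl _, hu₀1⟩
      exact hcl this
    have hu₀eq : h u₀ = m := le_antisymm hu₀A.2 hu₀ge
    -- all of Icc u₀ 1 maps into U
    have hIcc : ∀ u ∈ Icc u₀ 1, m ≤ h u := by
      intro u hu
      rcases eq_or_lt_of_le hu.1 with he | hlt
      · rw [← he, hu₀eq]
      · exact hIoc u ⟨hlt, hu.2⟩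
    set S : Set ℂ := g '' Icc u₀ 1 with hSdef
    have hSU : S ⊆ U := by
      rintro w ⟨u, hu, rfl⟩
      exact hmemU _ (lt_of_lt_of_le htm (hIcc u hu))
    have hSconn : IsPreconnected S := isPreconnected_Icc.image g hg.continuousOn
    have hpS : p ∈ S := ⟨1, ⟨le_of_lt hu₀lt1, le_refl _⟩, hg1⟩
    have hSsub : S ⊆ connectedComponentIn U p :=
      hSconn.subset_connectedComponentIn hpS hSU
    refine ⟨g u₀, ?_, hu₀eq⟩
    rw [hCp]
    exact hSsub ⟨u₀, ⟨le_refl _, hu₀1⟩, rfl⟩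
  -- now the finiteness argument
  by_contra hinf
  have hinf : Set.Infinite {C : Set ℂ | (∃ x ∈ (closure (DBall D z t))ᶜ,
        C = connectedComponentIn (closure (DBall D z t))ᶜ x) ∧
      (C ∩ (closure (DBall D z s))ᶜ).Nonempty} := hinf
  set 𝒞 := {C : Set ℂ | (∃ x ∈ (closure (DBall D z t))ᶜ,
        C = connectedComponentIn (closure (DBall D z t))ᶜ x) ∧
      (C ∩ (closure (DBall D z s))ᶜ).Nonempty} with h𝒞def
  have key' : ∀ C : Set ℂ, ∃ y, C ∈ 𝒞 → (y ∈ C ∧ D z y = m) := by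
    intro C
    by_cases hC : C ∈ 𝒞
    · obtain ⟨y, hy⟩ := key C hC
      exact ⟨y, fun _ => hy⟩
    · exact ⟨0, fun h => absurd h hC⟩
  choose y hy using key'
  -- each member of 𝒞 is the connected component of its chosen point
  have hcomp : ∀ C ∈ 𝒞, C = connectedComponentIn U (y C) := by
    intro C hC
    have hyC := (hy C hC).1
    obtain ⟨⟨x, hxU, hCx⟩, -⟩ := id hC
    rw [hCx] at hyC ⊢
    exact connectedComponentIn_eq hyC
  have hinj : Set.InjOn y 𝒞 := by
    intro C1 h1 C2 h2 he
    rw [hcomp C1 h1, hcomp C2 h2, he]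
  have hYinf : Set.Infinite (y '' 𝒞) := hinf.image hinj
  have hYsub : y '' 𝒞 ⊆ {w | D z w ≤ s} := by
    rintro w ⟨C, hC, rfl⟩
    exact le_of_lt ((hy C hC).2 ▸ hms)
  obtain ⟨q, hqK, hq⟩ := hYinf.exists_accPt_of_subset_isCompact (hcpt z s) hYsub
  rw [accPt_iff_nhds] at hq
  -- q has D z q = m
  have hqm : D z q = m := by
    have hYm : y '' 𝒞 ⊆ {w | D z w = m} := by
      rintro w ⟨C, hC, rfl⟩; exact (hy C hC).2
    have hqc : q ∈ closure (y '' 𝒞) := by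
      rw [mem_closure_iff_nhds]
      intro N hN
      obtain ⟨w, hw, _⟩ := hq N hN
      exact ⟨w, hw⟩
    exact closure_minimal hYm (isClosed_eq hf continuous_const) hqc
  have hqU : q ∈ U := hmemU q (hqm ▸ htm)
  set Cq := connectedComponentIn U q with hCqdef
  have hCqopen : IsOpen Cq := hUopen.connectedComponentIn
  have hCqnhds : Cq ∈ nhds q := hCqopen.mem_nhds (mem_connectedComponentIn hqU)
  obtain ⟨y₁, ⟨hy₁Cq, hy₁Y⟩, hy₁ne⟩ := hq Cq hCqnhds
  have hN2 : Cq \ {y₁} ∈ nhds q :=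
    (hCqopen.sdiff isClosed_singleton).mem_nhds ⟨mem_connectedComponentIn hqU,
      fun h => hy₁ne (Set.mem_singleton_iff.mp h).symm⟩
  obtain ⟨y₂, ⟨hy₂Cq, hy₂Y⟩, hy₂ne⟩ := hq (Cq \ {y₁}) hN2
  obtain ⟨C1, hC1, rfl⟩ := hy₁Y
  obtain ⟨C2, hC2, rfl⟩ := hy₂Y
  have hC1eq : C1 = Cq := by
    rw [hcomp C1 hC1, hCqdef, connectedComponentIn_eq hy₁Cq]
  have hC2eq : C2 = Cq := by
    rw [hcomp C2 hC2, hCqdef, connectedComponentIn_eq hy₂Cq.1]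
  have : y C1 = y C2 := by rw [hC1eq, hC2eq]
  exact hy₂Cq.2 (this ▸ rfl)
end
end

section
/- Let D be a metric on ℂ inducing the Euclidean topology such that all closed D-balls {w : D(z,w) ≤ t} are compact, and fix z ∈ ℂ. Assume: (i) for every p ∈ Z_z there is exactly one D-geodesic from z to p; (ii) for all s > t > 0 there is a finite set 𝒳 ⊆ {w : D(z,w) = t} such that every D-geodesic from z to a point of ℂ ∖ closure(𝓑_s(z)) passes through a point of 𝒳. Then for every D-geodesic σ : [0,T] → ℂ with σ(0) = z and every t ∈ (0,T), the set Z_z ∖ {σ(t)} is not connected, and σ([0,t)) and σ((t,T)) lie in different connected components of Z_z ∖ {σ(t)}. -/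
open Set Metric Filter

noncomputable section

namespace Stmt8

variable {D : ℂ → ℂ → ℝ}

lemma D_nonneg (hD : IsMetricOn D) (x y : ℂ) : 0 ≤ D x y := by
  have h := hD.triangle x y x
  rw [hD.self_dist, hD.symm y x] at h
  linarith

lemma D_abs_sub (hD : IsMetricOn D) (w x y : ℂ) : |D w x - D w y| ≤ D x y := by
  rw [abs_sub_le_iff]
  constructor
  · have h := hD.triangle w y x; rw [hD.symm y x] at h; linarith
  · have h := hD.triangle w x y; linarith

lemma tendsto_D_zero (hD : IsMetricOn D) (htop : InducesEuclTop D) {ι : Type*} {l : Filter ι}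
    {f : ι → ℂ} {q : ℂ} (h : Tendsto f l (nhds q)) :
    Tendsto (fun n => D q (f n)) l (nhds 0) := by
  rw [Metric.tendsto_nhds]
  intro ε hε
  obtain ⟨δ, hδ, hδ'⟩ := htop.1 q ε hε
  filter_upwards [Metric.tendsto_nhds.mp h δ hδ] with n hn
  rw [Real.dist_eq, sub_zero, abs_of_nonneg (D_nonneg hD q (f n))]
  exact hδ' (f n) (by rwa [dist_comm])

lemma tendsto_D (hD : IsMetricOn D) (htop : InducesEuclTop D) {ι : Type*} {l : Filter ι}
    {f : ι → ℂ} {q : ℂ} (z : ℂ) (h : Tendsto f l (nhds q)) :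
    Tendsto (fun n => D z (f n)) l (nhds (D z q)) := by
  rw [← tendsto_sub_nhds_zero_iff]
  apply squeeze_zero_norm (a := fun n => D q (f n)) _ (tendsto_D_zero hD htop h)
  intro n
  rw [Real.norm_eq_abs]
  calc |D z (f n) - D z q| ≤ D (f n) q := D_abs_sub hD z (f n) q
  _ = D q (f n) := hD.symm _ _

lemma cont_D (hD : IsMetricOn D) (htop : InducesEuclTop D) (z : ℂ) :
    Continuous (fun w => D z w) := by
  rw [continuous_iff_continuousAt]
  intro w
  exact tendsto_D hD htop z tendsto_id

lemma geod_dist {z w : ℂ} {γ : ℝ → ℂ} (hg : IsDGeodesic D z w γ) {r : ℝ}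
    (h0 : 0 ≤ r) (hL : r ≤ D z w) : D z (γ r) = r := by
  have h := hg.2.2.2 0 r le_rfl h0 hL
  rw [hg.1] at h
  simpa using h

lemma notMem_closure_ball (hD : IsMetricOn D) (htop : InducesEuclTop D) {z : ℂ} {s : ℝ}
    {w : ℂ} (h : s < D z w) : w ∉ closure (DBall D z s) := by
  intro hw
  have hsub : closure (DBall D z s) ⊆ {x | D z x ≤ s} :=
    closure_minimal (fun x hx => (le_of_lt hx : D z x ≤ s))
      (isClosed_le (cont_D hD htop z) continuous_const)
  have := hsub hw
  simp only [mem_setOf_eq] at this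
  linarith

lemma geod_level (hD : IsMetricOn D) {z w : ℂ} {γ : ℝ → ℂ} (hg : IsDGeodesic D z w γ)
    {X : Finset ℂ} {t : ℝ} (hX1 : ∀ x ∈ X, D z x = t)
    (h : ∃ x ∈ X, x ∈ γ '' Icc 0 (D z w)) : γ t ∈ (X : Set ℂ) ∧ t ≤ D z w := by
  obtain ⟨x, hxX, r, ⟨hr0, hrL⟩, hrx⟩ := h
  have hd : D z (γ r) = r := geod_dist hg hr0 hrL
  rw [hrx, hX1 x hxX] at hd
  subst hd
  rw [hrx]
  exact ⟨hxX, hrL⟩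

lemma ultra_const {U : Ultrafilter ℕ} {f : ℕ → ℂ} {X : Finset ℂ}
    (h : ∀ᶠ n in (U : Filter ℕ), f n ∈ (X : Set ℂ)) :
    ∃ x ∈ X, ∀ᶠ n in (U : Filter ℕ), f n = x := by
  have hmem : (X : Set ℂ) ∈ Ultrafilter.map f U := by
    rw [Ultrafilter.mem_map]
    exact h
  obtain ⟨x, hx, hpure⟩ := Ultrafilter.eq_pure_of_finite_mem X.finite_toSet hmem
  refine ⟨x, hx, ?_⟩
  have h1 : {x} ∈ Ultrafilter.map f U := by
    rw [hpure]; simp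
  rw [Ultrafilter.mem_map] at h1
  exact h1


lemma limit_geodesic (hD : IsMetricOn D) (htop : InducesEuclTop D) (z : ℂ)
    (hfin : ∀ t s : ℝ, 0 < t → t < s → ∃ X : Finset ℂ,
      (∀ x ∈ X, D z x = t) ∧
      ∀ (w : ℂ) (σ : ℝ → ℂ), w ∉ closure (DBall D z s) → IsDGeodesic D z w σ →
        ∃ x ∈ X, x ∈ σ '' Set.Icc 0 (D z w))
    {t : ℝ} (ht : 0 < t) {q : ℂ} (htL : t < D z q)
    (U : Ultrafilter ℕ) (qn : ℕ → ℂ) (γn : ℕ → ℝ → ℂ)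
    (hgeo : ∀ n, IsDGeodesic D z (qn n) (γn n))
    (hconv : Tendsto qn (U : Filter ℕ) (nhds q)) {x : ℂ}
    (hx : ∀ᶠ n in (U : Filter ℕ), γn n t = x) :
    ∃ τ, IsDGeodesic D z q τ ∧ τ t = x := by
  have hLn : Tendsto (fun n => D z (qn n)) (U : Filter ℕ) (nhds (D z q)) :=
    tendsto_D hD htop z hconv
  have key : ∀ r, r ∈ Ioo (0:ℝ) (D z q) → ∃ c : ℂ, ∀ᶠ n in (U : Filter ℕ), γn n r = c := by
    intro r hr
    obtain ⟨hr0, hrL⟩ := hr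
    obtain ⟨X, hX1, hX2⟩ := hfin r ((r + D z q)/2) hr0 (by linarith)
    have h2 : ∀ᶠ n in (U : Filter ℕ), (r + D z q)/2 < D z (qn n) :=
      hLn.eventually (eventually_gt_nhds (by linarith))
    have hev : ∀ᶠ n in (U : Filter ℕ), γn n r ∈ (X : Set ℂ) := by
      filter_upwards [h2] with n hn
      exact (geod_level hD (hgeo n) hX1
        (hX2 (qn n) (γn n) (notMem_closure_ball hD htop hn) (hgeo n))).1
    obtain ⟨c, _, hc⟩ := ultra_const hev
    exact ⟨c, hc⟩
  choose! τ hτ using key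
  have hDzτ : ∀ r, r ∈ Ioo (0:ℝ) (D z q) → D z (τ r) = r := by
    intro r hr
    obtain ⟨n, h1, h2⟩ := ((hτ r hr).and (hLn.eventually (eventually_ge_nhds hr.2))).exists
    rw [← h1]
    exact geod_dist (hgeo n) hr.1.le h2
  have hττ : ∀ r, r ∈ Ioo (0:ℝ) (D z q) → ∀ r', r' ∈ Ioo (0:ℝ) (D z q) → r ≤ r' →
      D (τ r) (τ r') = r' - r := by
    intro r hr r' hr' hle
    obtain ⟨n, h1, h2, h3⟩ :=
      ((hτ r hr).and ((hτ r' hr').and (hLn.eventually (eventually_ge_nhds hr'.2)))).exists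
    rw [← h1, ← h2]
    exact (hgeo n).2.2.2 r r' hr.1.le hle h3
  have hτq : ∀ r, r ∈ Ioo (0:ℝ) (D z q) → D (τ r) q = D z q - r := by
    intro r hr
    have e1 : Tendsto (fun n => D (τ r) (qn n)) (U : Filter ℕ) (nhds (D (τ r) q)) :=
      tendsto_D hD htop (τ r) hconv
    have e2 : (fun n => D (τ r) (qn n)) =ᶠ[(U : Filter ℕ)] fun n => D z (qn n) - r := by
      filter_upwards [hτ r hr, hLn.eventually (eventually_ge_nhds hr.2)] with n h1 h2
      rw [← h1]
      have h3 := (hgeo n).2.2.2 r (D z (qn n)) hr.1.le h2 le_rfl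
      rw [(hgeo n).2.1] at h3
      exact h3
    have e3 : Tendsto (fun n => D z (qn n) - r) (U : Filter ℕ) (nhds (D z q - r)) :=
      hLn.sub_const r
    exact tendsto_nhds_unique e1 (e3.congr' e2.symm)
  set σ' : ℝ → ℂ := fun r => if r ≤ 0 then z else if r < D z q then τ r else q with hσ'def
  have hLpos : 0 < D z q := ht.trans htL
  have hrel : ∀ a b : ℝ, 0 ≤ a → a ≤ b → b ≤ D z q → D (σ' a) (σ' b) = b - a := by
    intro a b ha hab hbL
    by_cases ha0 : a ≤ 0
    · have ha' : a = 0 := le_antisymm ha0 ha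
      by_cases hb0 : b ≤ 0
      · have hb' : b = 0 := le_antisymm hb0 (ha.trans hab)
        simp only [hσ'def, if_pos ha0, if_pos hb0, hD.self_dist, ha', hb', sub_zero]
      · by_cases hbL' : b < D z q
        · simp only [hσ'def, if_pos ha0, if_neg hb0, if_pos hbL']
          rw [hDzτ b ⟨not_le.1 hb0, hbL'⟩, ha', sub_zero]
        · have hb' : b = D z q := le_antisymm hbL (not_lt.1 hbL')
          simp only [hσ'def, if_pos ha0, if_neg hb0, if_neg hbL']
          rw [ha', hb', sub_zero]
    · have ha0' : 0 < a := not_le.1 ha0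
      have hb0 : ¬ b ≤ 0 := not_le.2 (ha0'.trans_le hab)
      by_cases haL : a < D z q
      · by_cases hbL' : b < D z q
        · simp only [hσ'def, if_neg ha0, if_pos haL, if_neg hb0, if_pos hbL']
          exact hττ a ⟨ha0', haL⟩ b ⟨ha0'.trans_le hab, hbL'⟩ hab
        · have hb' : b = D z q := le_antisymm hbL (not_lt.1 hbL')
          simp only [hσ'def, if_neg ha0, if_pos haL, if_neg hb0, if_neg hbL']
          rw [hτq a ⟨ha0', haL⟩, hb']
      · have ha' : a = D z q := le_antisymm (hab.trans hbL) (not_lt.1 haL)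
        have hb' : b = D z q := le_antisymm hbL (by rw [← ha']; exact hab)
        have hbL'' : ¬ b < D z q := by rw [hb']; exact lt_irrefl _
        simp only [hσ'def, if_neg ha0, if_neg haL, if_neg hb0, if_neg hbL'']
        rw [hD.self_dist, ha', hb', sub_self]
  have hcont : ContinuousOn σ' (Icc 0 (D z q)) := by
    intro a ha
    rw [Metric.continuousWithinAt_iff]
    intro ε hε
    obtain ⟨δ, hδ, hδ'⟩ := htop.2 (σ' a) ε hε
    refine ⟨δ, hδ, ?_⟩
    intro b hb hdist
    have hda : D (σ' a) (σ' b) ≤ |b - a| := by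
      rcases le_total a b with h | h
      · rw [hrel a b ha.1 h hb.2]
        exact le_abs_self _
      · rw [hD.symm, hrel b a hb.1 h ha.2]
        rw [abs_sub_comm]
        exact le_abs_self _
    have h5 : D (σ' a) (σ' b) < δ := lt_of_le_of_lt hda (by rwa [Real.dist_eq] at hdist)
    have h6 := hδ' (σ' b) h5
    rwa [dist_comm]
  refine ⟨σ', ⟨?_, ?_, hcont, hrel⟩, ?_⟩
  · simp [hσ'def]
  · have h1 : ¬ (D z q ≤ 0) := not_le.2 hLpos
    simp [hσ'def, h1]
  · have h1 : ¬ (t ≤ 0) := not_le.2 ht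
    simp only [hσ'def, if_neg h1, if_pos htL]
    obtain ⟨n, h2, h3⟩ := ((hτ t ⟨ht, htL⟩).and hx).exists
    rw [← h2, h3]

lemma loc_const (hD : IsMetricOn D) (htop : InducesEuclTop D) (z : ℂ)
    (hfin : ∀ t s : ℝ, 0 < t → t < s → ∃ X : Finset ℂ,
      (∀ x ∈ X, D z x = t) ∧
      ∀ (w : ℂ) (σ : ℝ → ℂ), w ∉ closure (DBall D z s) → IsDGeodesic D z w σ →
        ∃ x ∈ X, x ∈ σ '' Set.Icc 0 (D z w))
    (huniq : ∀ p ∈ geoTree D z, UniqueGeodesic D z p)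
    {t : ℝ} (ht : 0 < t) {q : ℂ} (hq : q ∈ geoTree D z) (hlt : t < D z q)
    {ρ : ℝ → ℂ} (hρ : IsDGeodesic D z q ρ) :
    ∃ δ > 0, ∀ q' : ℂ, dist q q' < δ →
      t < D z q' ∧ ∀ γ', IsDGeodesic D z q' γ' → γ' t = ρ t := by
  obtain ⟨δ₁, hδ₁, h1⟩ := htop.1 q (D z q - t) (by linarith)
  have main : ∃ δ₂ > (0:ℝ), ∀ q' : ℂ, dist q q' < δ₂ →
      ∀ γ', IsDGeodesic D z q' γ' → γ' t = ρ t := by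
    by_contra hcon
    push_neg at hcon
    have hcon' : ∀ n : ℕ, ∃ q', dist q q' < 1/(n+1) ∧
        ∃ γ', IsDGeodesic D z q' γ' ∧ γ' t ≠ ρ t := by
      intro n
      obtain ⟨q', h1', γ', h2', h3'⟩ := hcon (1/(n+1)) (by positivity)
      exact ⟨q', h1', γ', h2', h3'⟩
    choose qn hqd γn hγn hne using hcon'
    have hconv : Tendsto qn atTop (nhds q) := by
      rw [tendsto_iff_dist_tendsto_zero]
      apply squeeze_zero (fun n => dist_nonneg)
        (g := fun n : ℕ => 1/(n+1)) (fun n => by rw [dist_comm]; exact (hqd n).le)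
      exact tendsto_one_div_add_atTop_nhds_zero_nat
    set U : Ultrafilter ℕ := Ultrafilter.of atTop with hUdef
    have hU : (U : Filter ℕ) ≤ atTop := Ultrafilter.of_le _
    have hconvU : Tendsto qn (U : Filter ℕ) (nhds q) := hconv.mono_left hU
    obtain ⟨X, hX1, hX2⟩ := hfin t ((t + D z q)/2) ht (by linarith)
    have hLn : Tendsto (fun n => D z (qn n)) (U : Filter ℕ) (nhds (D z q)) :=
      tendsto_D hD htop z hconvU
    have hev : ∀ᶠ n in (U : Filter ℕ), γn n t ∈ (X : Set ℂ) := by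
      filter_upwards [hLn.eventually (eventually_gt_nhds
        (show (t + D z q)/2 < D z q by linarith))] with n hn
      exact (geod_level hD (hγn n) hX1
        (hX2 (qn n) (γn n) (notMem_closure_ball hD htop hn) (hγn n))).1
    obtain ⟨x, hxX, hxev⟩ := ultra_const hev
    obtain ⟨τσ, hτσ, hτt⟩ := limit_geodesic hD htop z hfin ht hlt U qn γn hγn hconvU hxev
    have heq := (huniq q hq).2 τσ ρ hτσ hρ (show t ∈ Icc 0 (D z q) from ⟨ht.le, hlt.le⟩)
    obtain ⟨n, hn⟩ := hxev.exists
    exact hne n (by rw [hn, ← hτt, heq])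
  obtain ⟨δ₂, hδ₂, h2⟩ := main
  refine ⟨min δ₁ δ₂, lt_min hδ₁ hδ₂, fun q' hd => ?_⟩
  constructor
  · have h3 : D q q' < D z q - t := h1 q' (hd.trans_le (min_le_left _ _))
    have h5 := hD.triangle z q' q
    rw [hD.symm q' q] at h5
    linarith
  · exact h2 q' (hd.trans_le (min_le_right _ _))

/-- The "branch" predicate: the geodesic to `q` passes through `p` at time `t`. -/
def InB (D : ℂ → ℂ → ℝ) (z : ℂ) (t : ℝ) (p q : ℂ) : Prop :=
  t < D z q ∧ ∃ γ, IsDGeodesic D z q γ ∧ γ t = p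

lemma openB (hD : IsMetricOn D) (htop : InducesEuclTop D) (z : ℂ)
    (hfin : ∀ t s : ℝ, 0 < t → t < s → ∃ X : Finset ℂ,
      (∀ x ∈ X, D z x = t) ∧
      ∀ (w : ℂ) (σ : ℝ → ℂ), w ∉ closure (DBall D z s) → IsDGeodesic D z w σ →
        ∃ x ∈ X, x ∈ σ '' Set.Icc 0 (D z w))
    (huniq : ∀ p ∈ geoTree D z, UniqueGeodesic D z p)
    {t : ℝ} (ht : 0 < t) {p : ℂ} (hDzp : D z p = t)
    {q : ℂ} (hq : q ∈ geoTree D z) (hB : InB D z t p q) :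
    ∃ δ > 0, ∀ q' ∈ geoTree D z, dist q q' < δ → q' ≠ p ∧ InB D z t p q' := by
  obtain ⟨hlt, γ, hγ, hγt⟩ := hB
  obtain ⟨δ, hδ, h1⟩ := loc_const hD htop z hfin huniq ht hq hlt hγ
  refine ⟨δ, hδ, fun q' hq' hd => ?_⟩
  obtain ⟨hlt', h2⟩ := h1 q' hd
  refine ⟨fun he => by rw [he, hDzp] at hlt'; exact lt_irrefl t hlt', ?_⟩
  obtain ⟨γ', hγ'⟩ := (huniq q' hq').1
  exact ⟨hlt', γ', hγ', by rw [h2 γ' hγ', hγt]⟩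

lemma openA (hD : IsMetricOn D) (htop : InducesEuclTop D) (z : ℂ)
    (hfin : ∀ t s : ℝ, 0 < t → t < s → ∃ X : Finset ℂ,
      (∀ x ∈ X, D z x = t) ∧
      ∀ (w : ℂ) (σ : ℝ → ℂ), w ∉ closure (DBall D z s) → IsDGeodesic D z w σ →
        ∃ x ∈ X, x ∈ σ '' Set.Icc 0 (D z w))
    (huniq : ∀ p ∈ geoTree D z, UniqueGeodesic D z p)
    {t : ℝ} (ht : 0 < t) {p : ℂ} (hDzp : D z p = t)
    {q : ℂ} (hq : q ∈ geoTree D z) (hqp : q ≠ p) (hB : ¬ InB D z t p q) :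
    ∃ δ > 0, ∀ q' ∈ geoTree D z, dist q q' < δ → q' ≠ p ∧ ¬ InB D z t p q' := by
  rcases lt_trichotomy (D z q) t with h | h | h
  · obtain ⟨δ, hδ, h1⟩ := htop.1 q (t - D z q) (by linarith)
    refine ⟨δ, hδ, fun q' _ hd => ?_⟩
    have hqq' : D q q' < t - D z q := h1 q' hd
    have hle : D z q' < t := lt_of_le_of_lt (hD.triangle z q q') (by linarith)
    constructor
    · intro he
      rw [he, hDzp] at hle
      exact lt_irrefl t hle
    · rintro ⟨h2, -⟩
      linarith
  · have hqp0 : 0 < D q p := by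
      rcases lt_or_eq_of_le (D_nonneg hD q p) with h' | h'
      · exact h'
      · exact absurd (hD.eq_of_dist_eq_zero q p h'.symm) hqp
    obtain ⟨δ, hδ, h1⟩ := htop.1 q (D q p / 2) (by linarith)
    refine ⟨δ, hδ, fun q' _ hd => ?_⟩
    have hqq' : D q q' < D q p / 2 := h1 q' hd
    constructor
    · intro he
      rw [he] at hqq'
      linarith
    · rintro ⟨hlt, γ', hγ', hγt⟩
      have hL' : D z q' ≤ t + D q q' := by
        have h4 := hD.triangle z q q'
        linarith [h.le]
      have h2 : D (γ' t) q' = D z q' - t := by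
        have h3 := hγ'.2.2.2 t (D z q') ht.le hlt.le le_rfl
        rw [hγ'.2.1] at h3
        exact h3
      have h3 : D p q' ≤ D q q' := by rw [← hγt]; linarith
      have h4 := hD.triangle q q' p
      rw [hD.symm q' p] at h4
      linarith
  · obtain ⟨ρ, hρ⟩ := (huniq q hq).1
    have hρt : ρ t ≠ p := fun he => hB ⟨h, ρ, hρ, he⟩
    obtain ⟨δ, hδ, h1⟩ := loc_const hD htop z hfin huniq ht hq h hρ
    refine ⟨δ, hδ, fun q' _ hd => ?_⟩
    obtain ⟨hlt, h2⟩ := h1 q' hd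
    constructor
    · intro he
      rw [he, hDzp] at hlt
      exact lt_irrefl t hlt
    · rintro ⟨-, γ', hγ', hγt⟩
      exact hρt (by rw [← h2 γ' hγ', hγt])

end Stmt8

open Stmt8

/-- Removing a point disconnects the geodesic tree `Z_z`.
Assume `D` induces the Euclidean topology, closed `D`-balls are compact, geodesics from `z` to
points of `Z_z` are unique, and the finite confluence property across `D`-annuli holds. Then
for every `D`-geodesic `σ : [0,T] → ℂ` starting at `z` and every `t ∈ (0,T)`, the set
`Z_z ∖ {σ t}` is not connected, and `σ([0,t))` and `σ((t,T))` lie in different connected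
components of `Z_z ∖ {σ t}`. -/
theorem statement_8 (D : ℂ → ℂ → ℝ) (hD : IsMetricOn D) (htop : InducesEuclTop D)
    (hcpt : ∀ z t, IsCompact {w | D z w ≤ t}) (z : ℂ)
    (huniq : ∀ p ∈ geoTree D z, UniqueGeodesic D z p)
    (hfin : ∀ t s : ℝ, 0 < t → t < s → ∃ X : Finset ℂ,
      (∀ x ∈ X, D z x = t) ∧
      ∀ (w : ℂ) (σ : ℝ → ℂ), w ∉ closure (DBall D z s) → IsDGeodesic D z w σ →
        ∃ x ∈ X, x ∈ σ '' Set.Icc 0 (D z w))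
    (σ : ℝ → ℂ) (T : ℝ) (hσ0 : σ 0 = z) (hσcont : ContinuousOn σ (Set.Icc 0 T))
    (hσgeo : ∀ t s : ℝ, 0 ≤ t → t ≤ s → s ≤ T → D (σ t) (σ s) = s - t)
    (t : ℝ) (ht : t ∈ Set.Ioo 0 T) :
    ¬ IsConnected (geoTree D z \ {σ t}) ∧
    ∀ a ∈ σ '' Set.Ico 0 t, ∀ b ∈ σ '' Set.Ioo t T,
      connectedComponentIn (geoTree D z \ {σ t}) a ≠
        connectedComponentIn (geoTree D z \ {σ t}) b := by
  obtain ⟨ht0, htT⟩ := ht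
  have hDz : ∀ r : ℝ, 0 ≤ r → r ≤ T → D z (σ r) = r := by
    intro r h0 hT
    have h := hσgeo 0 r le_rfl h0 hT
    rw [hσ0] at h
    simpa using h
  have hDzT : D z (σ T) = T := hDz T (le_of_lt (ht0.trans htT)) le_rfl
  have hσgeod : ∀ r : ℝ, 0 ≤ r → r ≤ T → IsDGeodesic D z (σ r) σ := by
    intro r h0 hT
    refine ⟨hσ0, ?_, ?_, ?_⟩
    · rw [hDz r h0 hT]
    · rw [hDz r h0 hT]
      exact hσcont.mono (Icc_subset_Icc le_rfl hT)
    · intro a b ha hab hbr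
      rw [hDz r h0 hT] at hbr
      exact hσgeo a b ha hab (hbr.trans hT)
  have hmemT : ∀ r : ℝ, 0 ≤ r → r < T → σ r ∈ geoTree D z := by
    intro r h0 hT
    exact ⟨σ T, σ, r, hσgeod T (le_of_lt (ht0.trans htT)) le_rfl, h0,
      by rwa [hDzT], rfl⟩
  set p := σ t with hpdef
  have hDzp : D z p = t := hDz t ht0.le htT.le
  set S := geoTree D z \ {p} with hSdef
  -- the two pieces
  set Aset : Set ℂ := {q | q ∈ geoTree D z ∧ q ≠ p ∧ ¬ InB D z t p q} with hAdef
  set Bset : Set ℂ := {q | q ∈ geoTree D z ∧ q ≠ p ∧ InB D z t p q} with hBdef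
  have hA : ∀ q ∈ Aset, ∃ δ > 0, ∀ q' ∈ geoTree D z, dist q q' < δ →
      q' ≠ p ∧ ¬ InB D z t p q' :=
    fun q hq => openA hD htop z hfin huniq ht0 hDzp hq.1 hq.2.1 hq.2.2
  have hB : ∀ q ∈ Bset, ∃ δ > 0, ∀ q' ∈ geoTree D z, dist q q' < δ →
      q' ≠ p ∧ InB D z t p q' :=
    fun q hq => openB hD htop z hfin huniq ht0 hDzp hq.1 hq.2.2
  choose! δA hδA0 hδA using hA
  choose! δB hδB0 hδB using hB
  set UA : Set ℂ := ⋃ q ∈ Aset, Metric.ball q (δA q) with hUAdef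
  set UB : Set ℂ := ⋃ q ∈ Bset, Metric.ball q (δB q) with hUBdef
  have hUAopen : IsOpen UA := isOpen_biUnion fun q _ => isOpen_ball
  have hUBopen : IsOpen UB := isOpen_biUnion fun q _ => isOpen_ball
  have hmemUA : ∀ q ∈ Aset, q ∈ UA := fun q hq =>
    mem_biUnion hq (mem_ball_self (hδA0 q hq))
  have hmemUB : ∀ q ∈ Bset, q ∈ UB := fun q hq =>
    mem_biUnion hq (mem_ball_self (hδB0 q hq))
  have hUAprop : ∀ w ∈ UA, w ∈ geoTree D z → w ≠ p ∧ ¬ InB D z t p w := by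
    intro w hw hwT
    obtain ⟨q, hq, hball⟩ := mem_iUnion₂.1 hw
    exact hδA q hq w hwT (by rw [dist_comm]; exact mem_ball.1 hball)
  have hUBprop : ∀ w ∈ UB, w ∈ geoTree D z → w ≠ p ∧ InB D z t p w := by
    intro w hw hwT
    obtain ⟨q, hq, hball⟩ := mem_iUnion₂.1 hw
    exact hδB q hq w hwT (by rw [dist_comm]; exact mem_ball.1 hball)
  have hcover : S ⊆ UA ∪ UB := by
    rintro q ⟨hqT, hqp⟩
    rw [mem_singleton_iff] at hqp
    by_cases hInB : InB D z t p q
    · exact Or.inr (hmemUB q ⟨hqT, hqp, hInB⟩)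
    · exact Or.inl (hmemUA q ⟨hqT, hqp, hInB⟩)
  have hdisj : S ∩ (UA ∩ UB) = ∅ := by
    rw [eq_empty_iff_forall_notMem]
    rintro w ⟨⟨hwT, -⟩, hwA, hwB⟩
    exact (hUAprop w hwA hwT).2 (hUBprop w hwB hwT).2
  -- membership of the two arcs
  have harcA : ∀ r : ℝ, 0 ≤ r → r < t → σ r ∈ Aset := by
    intro r h0 hrt
    have hT : r < T := hrt.trans htT
    have hDzr : D z (σ r) = r := hDz r h0 hT.le
    refine ⟨hmemT r h0 hT, ?_, ?_⟩
    · intro he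
      rw [he, hDzp] at hDzr
      exact absurd hDzr (by linarith)
    · rintro ⟨hlt, -⟩
      rw [hDzr] at hlt
      linarith
  have harcB : ∀ r : ℝ, t < r → r < T → σ r ∈ Bset := by
    intro r hrt hT
    have h0 : (0:ℝ) ≤ r := le_of_lt (ht0.trans hrt)
    have hDzr : D z (σ r) = r := hDz r h0 hT.le
    refine ⟨hmemT r h0 hT, ?_, ?_⟩
    · intro he
      rw [he, hDzp] at hDzr
      exact absurd hDzr (by linarith)
    · exact ⟨by rwa [hDzr], σ, hσgeod r h0 hT.le, rfl⟩
  have harcAS : ∀ r : ℝ, 0 ≤ r → r < t → σ r ∈ S := by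
    intro r h0 hrt
    obtain ⟨h1, h2, -⟩ := harcA r h0 hrt
    exact ⟨h1, h2⟩
  have harcBS : ∀ r : ℝ, t < r → r < T → σ r ∈ S := by
    intro r hrt hT
    obtain ⟨h1, h2, -⟩ := harcB r hrt hT
    exact ⟨h1, h2⟩
  constructor
  · intro hcon
    have ha : σ 0 ∈ S ∩ UA :=
      ⟨harcAS 0 le_rfl ht0, hmemUA _ (harcA 0 le_rfl ht0)⟩
    have hb : σ ((t + T)/2) ∈ S ∩ UB :=
      ⟨harcBS _ (by linarith) (by linarith), hmemUB _ (harcB _ (by linarith) (by linarith))⟩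
    obtain ⟨w, hw⟩ := hcon.isPreconnected UA UB hUAopen hUBopen hcover ⟨_, ha⟩ ⟨_, hb⟩
    rw [hdisj] at hw
    exact hw
  · rintro a ⟨r₁, ⟨hr₁0, hr₁t⟩, rfl⟩ b ⟨r₂, ⟨hr₂t, hr₂T⟩, rfl⟩ heq
    have haS : σ r₁ ∈ S := harcAS r₁ hr₁0 hr₁t
    have hbS : σ r₂ ∈ S := harcBS r₂ hr₂t hr₂T
    set C := connectedComponentIn S (σ r₁) with hCdef
    have haC : σ r₁ ∈ C := mem_connectedComponentIn haS
    have hbC : σ r₂ ∈ C := heq.symm ▸ mem_connectedComponentIn hbS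
    have hCS : C ⊆ S := connectedComponentIn_subset _ _
    have hCpre : IsPreconnected C := isPreconnected_connectedComponentIn
    obtain ⟨w, hw⟩ := hCpre UA UB hUAopen hUBopen (hCS.trans hcover)
      ⟨σ r₁, haC, hmemUA _ (harcA r₁ hr₁0 hr₁t)⟩
      ⟨σ r₂, hbC, hmemUB _ (harcB r₂ hr₂t hr₂T)⟩
    have : w ∈ S ∩ (UA ∩ UB) := ⟨hCS hw.1, hw.2⟩
    rw [hdisj] at this
    exact this
end
end

section
/- Let D be a metric on ℂ inducing the Euclidean topology such that every pair of points of ℂ is joined by at least one D-geodesic and every point of ℂ admits at least one D-geodesic to ∞. Assume the following confluence property: for every R > 0 there exist R' > R and x ∈ B_{R'}(0) ∖ B_R(0) such that every D-geodesic from a point of B_R(0) to a point of ℂ ∖ B_{R'}(0) passes through x. Then for every R > 0 there exists z ∈ ℂ such that Z_∞ ∩ B_R(0) = Z_z ∩ B_R(0); moreover, z can be chosen so that for every point w ∈ ℂ and every D-geodesic σ from w to ∞ whose image intersects B_R(0), there is a D-geodesic σ̃ from w to z with σ(t) = σ̃(t) for every t ≥ 0 such that σ(t) ∈ B_R(0).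 -/
open Set Metric Filter

noncomputable section

/-- Any map which is a `D`-isometry on `A` is Euclidean-continuous on `A`. -/
lemma contOn_of_dist (D : ℂ → ℂ → ℝ) (hD : IsMetricOn D) (htop : InducesEuclTop D)
    (γ : ℝ → ℂ) (A : Set ℝ)
    (h : ∀ t s : ℝ, t ∈ A → s ∈ A → t ≤ s → D (γ t) (γ s) = s - t) :
    ContinuousOn γ A := by
  rw [Metric.continuousOn_iff]
  intro b hb ε hε
  obtain ⟨δ, hδ, hδ'⟩ := htop.2 (γ b) ε hε
  refine ⟨δ, hδ, fun a ha hab => ?_⟩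
  have hDab : D (γ b) (γ a) < δ := by
    rcases le_total a b with hc | hc
    · rw [hD.symm, h a b ha hb hc]
      calc b - a ≤ |a - b| := by rw [abs_sub_comm]; exact le_abs_self _
        _ < δ := by rwa [← Real.dist_eq]
    · rw [h b a hb ha hc]
      calc a - b ≤ |a - b| := le_abs_self _
        _ < δ := by rwa [← Real.dist_eq]
  have := hδ' _ hDab
  rwa [dist_comm] at this

lemma contD (D : ℂ → ℂ → ℝ) (hD : IsMetricOn D) (htop : InducesEuclTop D) (z : ℂ) :
    Continuous (D z) := by
  rw [Metric.continuous_iff]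
  intro b ε hε
  obtain ⟨δ, hδ, hδ'⟩ := htop.1 b ε hε
  refine ⟨δ, hδ, fun a hab => ?_⟩
  have h1 : D z a ≤ D z b + D b a := hD.triangle _ _ _
  have h2 : D z b ≤ D z a + D b a := by
    have := hD.triangle z a b
    rwa [hD.symm a b] at this
  have hba : D b a < ε := hδ' a (by rwa [dist_comm])
  rw [Real.dist_eq, abs_sub_lt_iff]
  constructor <;> linarith

/-- An infinite `D`-geodesic leaves every Euclidean ball at arbitrarily late times. -/
lemma exitBall (D : ℂ → ℂ → ℝ) (hD : IsMetricOn D) (htop : InducesEuclTop D)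
    (ζ : ℝ → ℂ) (hζ : ∀ t s : ℝ, 0 ≤ t → t ≤ s → D (ζ t) (ζ s) = s - t)
    (t₀ : ℝ) (ht₀ : 0 ≤ t₀) (r : ℝ) : ∃ s, t₀ < s ∧ ζ s ∉ Metric.ball (0:ℂ) r := by
  have hc : IsCompact (Metric.closedBall (0:ℂ) (max r 0)) := isCompact_closedBall _ _
  obtain ⟨y₀, hy₀, hmax⟩ := hc.exists_isMaxOn
    ⟨0, by simp [le_max_right]⟩ (contD D hD htop (ζ t₀)).continuousOn
  set M := D (ζ t₀) y₀
  refine ⟨t₀ + max M 0 + 1, by linarith [le_max_right M 0], fun hmem => ?_⟩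
  have hmem' : ζ (t₀ + max M 0 + 1) ∈ Metric.closedBall (0:ℂ) (max r 0) := by
    rw [Metric.mem_closedBall]
    exact le_trans (le_of_lt (Metric.mem_ball.mp hmem)) (le_max_left _ _)
  have h1 : D (ζ t₀) (ζ (t₀ + max M 0 + 1)) ≤ M := hmax hmem'
  have h2 : D (ζ t₀) (ζ (t₀ + max M 0 + 1)) = max M 0 + 1 := by
    rw [hζ t₀ _ ht₀ (by linarith [le_max_right M 0])]; ring
  have := le_max_left M 0
  linarith

/-- Comparing `Z_∞` and `Z_z`.
Assume `D` induces the Euclidean topology, every pair of points of `ℂ` is joined by a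
`D`-geodesic, every point admits a `D`-geodesic to `∞`, and the confluence property across
Euclidean annuli holds. Then for every `R > 0` there is `z ∈ ℂ` with
`Z_∞ ∩ B_R(0) = Z_z ∩ B_R(0)`; moreover `z` can be chosen so that every `D`-geodesic `σ` from
a point `w` to `∞` meeting `B_R(0)` agrees, at all times `t ≥ 0` with `σ t ∈ B_R(0)`, with
some `D`-geodesic from `w` to `z`. -/
theorem statement_9 (D : ℂ → ℂ → ℝ) (hD : IsMetricOn D) (htop : InducesEuclTop D)
    (hgeo : ∀ z w : ℂ, ∃ σ, IsDGeodesic D z w σ)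
    (hgeoInf : ∀ w : ℂ, ∃ σ, IsDGeodesicToInfty D w σ)
    (hconf : ∀ R > (0:ℝ), ∃ R' > R, ∃ x ∈ Metric.ball (0:ℂ) R' \ Metric.ball (0:ℂ) R,
      ∀ (u v : ℂ) (σ : ℝ → ℂ), u ∈ Metric.ball (0:ℂ) R → v ∉ Metric.ball (0:ℂ) R' →
        IsDGeodesic D u v σ → x ∈ σ '' Set.Icc 0 (D u v)) :
    ∀ R > (0:ℝ), ∃ z : ℂ,
      geoTreeInfty D ∩ Metric.ball (0:ℂ) R = geoTree D z ∩ Metric.ball (0:ℂ) R ∧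
      ∀ (w : ℂ) (σ : ℝ → ℂ), IsDGeodesicToInfty D w σ →
        (σ '' Set.Ici 0 ∩ Metric.ball (0:ℂ) R).Nonempty →
        ∃ σ' : ℝ → ℂ, IsDGeodesic D w z σ' ∧
          ∀ t : ℝ, 0 ≤ t → σ t ∈ Metric.ball (0:ℂ) R → σ t = σ' t := by
  intro R hR
  obtain ⟨R', hRR', x, hx, hconf'⟩ := hconf R hR
  have hxR : x ∉ Metric.ball (0:ℂ) R := hx.2
  -- Any infinite geodesic visiting `B_R(0)` at time `t₀` hits `x` at some time `≥ t₀`.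
  have hitx : ∀ (ζ : ℝ → ℂ), (∀ t s : ℝ, 0 ≤ t → t ≤ s → D (ζ t) (ζ s) = s - t) →
      ∀ t₀, 0 ≤ t₀ → ζ t₀ ∈ Metric.ball (0:ℂ) R → ∃ tx, t₀ ≤ tx ∧ ζ tx = x := by
    intro ζ hζ t₀ ht₀ hmem
    obtain ⟨s, hs, hout⟩ := exitBall D hD htop ζ hζ t₀ ht₀ R'
    have hL : D (ζ t₀) (ζ s) = s - t₀ := hζ t₀ s ht₀ hs.le
    have hdist : ∀ a b : ℝ, 0 ≤ a → a ≤ b → b ≤ D (ζ t₀) (ζ s) →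
        D (ζ (t₀ + a)) (ζ (t₀ + b)) = b - a := by
      intro a b ha hab hb
      rw [hζ (t₀ + a) (t₀ + b) (by linarith) (by linarith)]; ring
    have hgeod : IsDGeodesic D (ζ t₀) (ζ s) (fun τ => ζ (t₀ + τ)) := by
      refine ⟨by simp, ?_, ?_, hdist⟩
      · rw [hL]; congr 1; ring
      · exact contOn_of_dist D hD htop _ _
          (fun a b ha hb hab => hdist a b ha.1 hab hb.2)
    obtain ⟨τ, hτ, hτx⟩ := hconf' (ζ t₀) (ζ s) _ hmem hout hgeod
    exact ⟨t₀ + τ, by linarith [hτ.1], hτx⟩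
  refine ⟨x, ?_, ?_⟩
  · -- the set equality
    ext p
    simp only [Set.mem_inter_iff, geoTree, geoTreeInfty, Set.mem_setOf_eq]
    constructor
    · rintro ⟨⟨w, σ, t, hσ, ht, hpt⟩, hpB⟩
      refine ⟨?_, hpB⟩
      have hmem : σ t ∈ Metric.ball (0:ℂ) R := hpt ▸ hpB
      obtain ⟨tx, htt, hζx⟩ := hitx σ hσ.2.2 t ht.le hmem
      have h0 : D (σ 0) (σ tx) = tx := by
        have := hσ.2.2 0 tx le_rfl (le_trans ht.le htt); linarith
      have htlt : t < tx := by
        rcases lt_or_eq_of_le htt with h | h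
        · exact h
        · exfalso; apply hxR; rw [← hζx, ← h, hpt]; exact hpB
      have hDxw : D x w = tx := by
        rw [hD.symm, ← hσ.1, ← hζx]; exact h0
      have hρd : ∀ a b : ℝ, 0 ≤ a → a ≤ b → b ≤ D x w →
          D (σ (tx - a)) (σ (tx - b)) = b - a := by
        intro a b ha hab hb
        rw [hDxw] at hb
        rw [hD.symm, hσ.2.2 (tx - b) (tx - a) (by linarith) (by linarith)]
        ring
      refine ⟨w, fun s => σ (tx - s), tx - t, ⟨?_, ?_, ?_, hρd⟩,
        by linarith, by rw [hDxw]; linarith, ?_⟩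
      · show σ (tx - 0) = x
        rw [sub_zero]; exact hζx
      · show σ (tx - D x w) = w
        rw [hDxw, sub_self]; exact hσ.1
      · exact contOn_of_dist D hD htop _ _
          (fun a b ha hb hab => hρd a b ha.1 hab hb.2)
      · show σ (tx - (tx - t)) = p
        rw [show tx - (tx - t) = t by ring]; exact hpt
    · rintro ⟨⟨w, σ, t, hσ, ht, htL, hpt⟩, hpB⟩
      refine ⟨?_, hpB⟩
      -- find a time t'' > t with σ t'' still in the ball
      have hcw : ContinuousWithinAt σ (Set.Icc 0 (D x w)) t := hσ.2.2.1 t ⟨ht, htL.le⟩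
      have hev : ∀ᶠ u in nhdsWithin t (Set.Icc 0 (D x w)), σ u ∈ Metric.ball (0:ℂ) R :=
        hcw (Metric.isOpen_ball.mem_nhds (hpt ▸ hpB))
      have hle : nhdsWithin t (Set.Ioc t (D x w)) ≤ nhdsWithin t (Set.Icc 0 (D x w)) :=
        nhdsWithin_mono _ (fun u hu => ⟨le_trans ht hu.1.le, hu.2⟩)
      have hne : (nhdsWithin t (Set.Ioc t (D x w))).NeBot := by
        rw [nhdsWithin_Ioc_eq_nhdsGT htL]
        infer_instance
      obtain ⟨t'', hσt'', ht''⟩ :=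
        ((hev.filter_mono hle).and self_mem_nhdsWithin).exists
      obtain ⟨htt'', ht''L⟩ := ht''
      have ht''0 : 0 ≤ t'' := le_trans ht htt''.le
      -- the infinite geodesic from q = σ t'' hits x at time exactly t''
      obtain ⟨ζ, hζ⟩ := hgeoInf (σ t'')
      obtain ⟨τx, hτx0, hτxx⟩ := hitx ζ hζ.2.2 0 le_rfl (by rw [hζ.1]; exact hσt'')
      have hq0 : D (σ 0) (σ t'') = t'' := by
        have := hσ.2.2.2 0 t'' le_rfl ht''0 ht''L; linarith
      have hτeq : τx = t'' := by
        have e1 : D (ζ 0) (ζ τx) = τx := by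
          have := hζ.2.2 0 τx le_rfl hτx0; linarith
        rw [hζ.1, hτxx] at e1
        rw [← e1, hD.symm, ← hσ.1]
        exact hq0
      have hζt'' : ζ t'' = x := by rw [← hτeq]; exact hτxx
      -- the concatenated infinite geodesic through p
      set γ : ℝ → ℂ := fun s => if s ≤ t'' then σ (t'' - s) else ζ s with hγdef
      have hγd : ∀ a b : ℝ, 0 ≤ a → a ≤ b → D (γ a) (γ b) = b - a := by
        intro a b ha hab
        by_cases hb : b ≤ t''
        · have ha' : a ≤ t'' := hab.trans hb
          simp only [hγdef, if_pos ha', if_pos hb]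
          rw [hD.symm, hσ.2.2.2 (t'' - b) (t'' - a) (by linarith) (by linarith)
            (by linarith)]
          ring
        · push_neg at hb
          by_cases ha' : a ≤ t''
          · simp only [hγdef, if_pos ha', if_neg (not_le.mpr hb)]
            have e1 : D (σ (t'' - a)) x = t'' - a := by
              rw [hD.symm, ← hσ.1, hσ.2.2.2 0 (t'' - a) le_rfl (by linarith) (by linarith)]
              ring
            have e2 : D x (ζ b) = b - t'' := by
              rw [← hζt'']; exact hζ.2.2 t'' b ht''0 hb.le
            have hub : D (σ (t'' - a)) (ζ b) ≤ b - a := by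
              calc D (σ (t'' - a)) (ζ b) ≤ D (σ (t'' - a)) x + D x (ζ b) :=
                    hD.triangle _ _ _
                _ = b - a := by rw [e1, e2]; ring
            have e3 : D (σ t'') (ζ b) = b := by
              have := hζ.2.2 0 b le_rfl (le_trans ht''0 hb.le)
              rw [hζ.1] at this; linarith
            have e4 : D (σ t'') (σ (t'' - a)) = a := by
              rw [hD.symm, hσ.2.2.2 (t'' - a) t'' (by linarith) (by linarith) ht''L]
              ring
            have hlb : b ≤ a + D (σ (t'' - a)) (ζ b) := by
              calc b = D (σ t'') (ζ b) := e3.symm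
                _ ≤ D (σ t'') (σ (t'' - a)) + D (σ (t'' - a)) (ζ b) := hD.triangle _ _ _
                _ = a + D (σ (t'' - a)) (ζ b) := by rw [e4]
            linarith
          · push_neg at ha'
            simp only [hγdef, if_neg (not_le.mpr ha'), if_neg (not_le.mpr hb)]
            exact hζ.2.2 a b ha hab
      have hγ : IsDGeodesicToInfty D (σ t'') γ := by
        refine ⟨?_, ?_, hγd⟩
        · simp only [hγdef, if_pos ht''0, sub_zero]
        · exact contOn_of_dist D hD htop _ _ (fun a b ha hb hab => hγd a b ha hab)
      refine ⟨σ t'', γ, t'' - t, hγ, by linarith, ?_⟩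
      simp only [hγdef, if_pos (show t'' - t ≤ t'' by linarith)]
      rw [show t'' - (t'' - t) = t by ring]; exact hpt
  · -- the "moreover" part
    rintro w σ hσ ⟨p, ⟨t₀, ht₀, hpt⟩, hpB⟩
    obtain ⟨tx, htx, hζx⟩ := hitx σ hσ.2.2 t₀ ht₀ (by rw [hpt]; exact hpB)
    have htx0 : 0 ≤ tx := le_trans ht₀ htx
    have hDwx : D w x = tx := by
      rw [← hσ.1, ← hζx]
      have := hσ.2.2 0 tx le_rfl htx0; linarith
    refine ⟨σ, ⟨hσ.1, ?_, ?_, ?_⟩, fun t _ _ => rfl⟩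
    · rw [hDwx]; exact hζx
    · exact hσ.2.1.mono (by rw [hDwx]; exact Set.Icc_subset_Ici_self)
    · exact fun t s htt hts _ => hσ.2.2 t s htt hts
end
end

section
/- Let D be a metric on ℂ inducing the Euclidean topology and let z ∈ ℂ be such that every point of ℂ is joined to z by at least one D-geodesic. Assume that for all s > t > 0 there is a finite set 𝒳_{t,s} ⊆ {w : D(z,w) = t} such that every D-geodesic from z to a point of ℂ ∖ closure(𝓑_s(z)) passes through a point of 𝒳_{t,s}. Then for every T > 0 and δ > 0 there is a finite set 𝒴 ⊆ 𝓑_T(z) ∩ Z_z such that every D-geodesic σ : [0, D(w,z)] → ℂ from a point w ∈ 𝓑_T(z) to z satisfies σ(t) ∈ 𝒴 for some t ∈ [0, δ]. -/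
open Set Metric Filter

noncomputable section

lemma dnonneg {D : ℂ → ℂ → ℝ} (hD : IsMetricOn D) (x y : ℂ) : 0 ≤ D x y := by
  have h1 := hD.triangle x y x
  rw [hD.self_dist, hD.symm y x] at h1
  linarith

lemma reverse_geo {D : ℂ → ℂ → ℝ} (hD : IsMetricOn D) {w z : ℂ} {σ : ℝ → ℂ}
    (h : IsDGeodesic D w z σ) : IsDGeodesic D z w (fun u => σ (D w z - u)) := by
  obtain ⟨h0, hL, hc, hg⟩ := h
  have hsymm : D z w = D w z := hD.symm z w
  refine ⟨by simpa using hL, by simp [hsymm, h0], ?_, ?_⟩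
  · rw [hsymm]
    exact hc.comp ((continuous_const.sub continuous_id).continuousOn)
      (fun u hu => ⟨by simpa using hu.2, by simpa using hu.1⟩)
  · intro t s ht hts hsle
    rw [hsymm] at hsle
    have hgg := hg (D w z - s) (D w z - t) (by linarith) (by linarith) (by linarith)
    simp only []
    rw [hD.symm, hgg]
    ring

lemma closure_dball {D : ℂ → ℂ → ℝ} (hD : IsMetricOn D) (htop : InducesEuclTop D)
    (z : ℂ) (s : ℝ) : closure (DBall D z s) ⊆ {x | D z x ≤ s} := by
  have hsub : DBall D z s ⊆ {x : ℂ | D z x ≤ s} := fun x hx => le_of_lt (show D z x < s from hx)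
  refine closure_minimal hsub ?_
  rw [show {x : ℂ | D z x ≤ s} = {x : ℂ | s < D z x}ᶜ by ext x; simp]
  refine isClosed_compl_iff.mpr ?_
  rw [Metric.isOpen_iff]
  intro x hx
  obtain ⟨ε, hε, hball⟩ := htop.1 x (D z x - s) (by simp only [Set.mem_setOf_eq] at hx; linarith)
  refine ⟨ε, hε, fun w hw => ?_⟩
  have h1 := hball w (by rw [Metric.mem_ball, dist_comm] at hw; exact hw)
  have h2 := hD.triangle z w x
  have h3 : D w x = D x w := hD.symm w x
  simp only [Set.mem_setOf_eq] at hx ⊢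
  linarith

/-- Confluence in a `D`-ball.
Assume `D` induces the Euclidean topology, every point of `ℂ` is joined to `z` by a
`D`-geodesic, and the finite confluence property across `D`-annuli holds. Then for every
`T > 0` and `δ > 0` there is a finite set `𝒴 ⊆ 𝓑_T(z) ∩ Z_z` such that every `D`-geodesic
from a point `w ∈ 𝓑_T(z)` to `z` visits a point of `𝒴` at or before time `δ`. -/
theorem statement_10 (D : ℂ → ℂ → ℝ) (hD : IsMetricOn D) (htop : InducesEuclTop D)
    (z : ℂ) (hgeo : ∀ w : ℂ, ∃ σ, IsDGeodesic D w z σ)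
    (hfin : ∀ t s : ℝ, 0 < t → t < s → ∃ X : Finset ℂ,
      (∀ x ∈ X, D z x = t) ∧
      ∀ (w : ℂ) (σ : ℝ → ℂ), w ∉ closure (DBall D z s) → IsDGeodesic D z w σ →
        ∃ x ∈ X, x ∈ σ '' Set.Icc 0 (D z w)) :
    ∀ T > (0:ℝ), ∀ δ > (0:ℝ), ∃ Y : Finset ℂ,
      (Y : Set ℂ) ⊆ DBall D z T ∩ geoTree D z ∧
      ∀ (w : ℂ) (σ : ℝ → ℂ), w ∈ DBall D z T → IsDGeodesic D w z σ →
        ∃ t ∈ Set.Icc (0:ℝ) δ, σ t ∈ Y := by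
  intro T hT δ hδ
  classical
  set N := Nat.ceil (2*T/δ) with hN
  have key : ∀ i : ℕ, 0 < i → ∃ X : Finset ℂ, (∀ x ∈ X, D z x = i * (δ/2)) ∧
      ∀ (w : ℂ) (σ : ℝ → ℂ), w ∉ closure (DBall D z (i*(δ/2) + δ/4)) → IsDGeodesic D z w σ →
        ∃ x ∈ X, x ∈ σ '' Set.Icc 0 (D z w) := by
    intro i hi
    have hi1 : (1:ℝ) ≤ i := by exact_mod_cast hi
    have h1 : (0:ℝ) < i * (δ/2) := by nlinarith
    exact hfin _ _ h1 (by linarith)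
  choose X hX1 hX2 using key
  refine ⟨insert z ((Finset.Icc 1 N).biUnion fun i =>
      if h : 0 < i then (X i h).filter (fun x => x ∈ geoTree D z ∧ D z x < T) else ∅), ?_, ?_⟩
  · intro y hy
    rw [Finset.mem_coe, Finset.mem_insert] at hy
    rcases hy with h | hy
    · subst h
      constructor
      · show D y y < T
        rw [hD.self_dist]; exact hT
      · obtain ⟨σ0, hσ0⟩ := hgeo (y+1)
        have hτ := reverse_geo hD hσ0
        have hne : D y (y+1) ≠ 0 := fun h => by
          have := hD.eq_of_dist_eq_zero _ _ h; simp at this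
        have hpos : 0 < D y (y+1) := lt_of_le_of_ne (dnonneg hD y (y+1)) (Ne.symm hne)
        exact ⟨y+1, _, 0, hτ, le_refl 0, hpos, hτ.1⟩
    · obtain ⟨i, hiIcc, hyi⟩ := Finset.mem_biUnion.mp hy
      have hipos : 0 < i := (Finset.mem_Icc.mp hiIcc).1
      rw [dif_pos hipos, Finset.mem_filter] at hyi
      exact ⟨hyi.2.2, hyi.2.1⟩
  · intro w σ hw hσ
    have hsymm : D w z = D z w := hD.symm w z
    have hwT : D z w < T := hw
    set L := D w z with hLdef
    have hLT : L < T := by rw [hsymm]; exact hwT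
    have hL0 : 0 ≤ L := dnonneg hD w z
    by_cases hcase : L ≤ δ
    · refine ⟨L, ⟨hL0, hcase⟩, ?_⟩
      have : σ L = z := hσ.2.1
      rw [this]
      exact Finset.mem_insert_self _ _
    · push_neg at hcase
      set i := Nat.ceil ((L - 3*(δ/4)) / (δ/2)) with hidef
      have hx' : 0 < L - 3*(δ/4) := by linarith
      have hd2 : (0:ℝ) < δ/2 := by linarith
      have hipos : 0 < i := Nat.ceil_pos.mpr (div_pos hx' hd2)
      have hge : (L - 3*(δ/4)) / (δ/2) ≤ (i:ℝ) := Nat.le_ceil _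
      have hlt : (i:ℝ) < (L - 3*(δ/4)) / (δ/2) + 1 :=
        Nat.ceil_lt_add_one (le_of_lt (div_pos hx' hd2))
      have hxd : (L - 3*(δ/4)) / (δ/2) * (δ/2) = L - 3*(δ/4) :=
        div_mul_cancel₀ _ (ne_of_gt hd2)
      have hti_ge : L - 3*(δ/4) ≤ (i:ℝ) * (δ/2) := by nlinarith
      have hti_lt : (i:ℝ) * (δ/2) < L - δ/4 := by nlinarith
      have hiN : i ≤ N := by
        have h2T : (i:ℝ) < 2*T/δ := by
          rw [lt_div_iff₀ hδ]; nlinarith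
        have hNle : 2*T/δ ≤ (N:ℝ) := Nat.le_ceil _
        have : (i:ℝ) < (N:ℝ) := lt_of_lt_of_le h2T hNle
        exact_mod_cast le_of_lt this
      have hwout : w ∉ closure (DBall D z ((i:ℝ)*(δ/2) + δ/4)) := by
        intro hmem
        have h1 := closure_dball hD htop z _ hmem
        simp only [Set.mem_setOf_eq] at h1
        rw [← hsymm] at h1
        linarith
      have hτ : IsDGeodesic D z w (fun u => σ (L - u)) := reverse_geo hD hσ
      obtain ⟨x, hxX, u, hu, hxu⟩ := hX2 i hipos w _ hwout hτ
      have hDzw : D z w = L := hsymm.symm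
      have hDzx : D z x = u := by
        have h0 : (fun u => σ (L - u)) 0 = z := hτ.1
        have hgg := hτ.2.2.2 0 u (le_refl 0) hu.1 hu.2
        rw [h0, hxu] at hgg
        linarith
      have hDzx' : D z x = (i:ℝ)*(δ/2) := hX1 i hipos x hxX
      have huval : u = (i:ℝ)*(δ/2) := by rw [← hDzx, hDzx']
      refine ⟨L - (i:ℝ)*(δ/2), ⟨by linarith, by linarith⟩, ?_⟩
      have hσval : σ (L - (i:ℝ)*(δ/2)) = x := by
        rw [← huval]; exact hxu
      rw [hσval]
      apply Finset.mem_insert_of_mem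
      refine Finset.mem_biUnion.mpr ⟨i, Finset.mem_Icc.mpr ⟨hipos, hiN⟩, ?_⟩
      rw [dif_pos hipos, Finset.mem_filter]
      refine ⟨hxX, ⟨w, _, (i:ℝ)*(δ/2), hτ, by positivity, by rw [hDzw]; linarith, ?_⟩, by linarith⟩
      rw [← huval]; exact hxu
end
end

section
/- Let μ be a Borel measure on ℂ that is finite on compact sets, assigns positive mass to every nonempty open set, and assigns zero mass to every singleton. Let f : (−1,1) → ℂ be continuous such that: (i) for all −1 < a < b < 1 the set f([a,b]) has nonempty interior; and (ii) whenever [a,b], [c,d] ⊆ (−1,1) are closed intervals with disjoint interiors, the topological interiors of f([a,b]) and f([c,d]) are disjoint. Define φ : (−1,1) → ℝ by φ(t) = μ(f([0,t])) for t ≥ 0 and φ(t) = −μ(f([t,0])) for t < 0. Then φ is strictly increasing and continuous. -/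
open Set MeasureTheory Filter

noncomputable section

/-- The area reparametrization is a strictly increasing homeomorphism.
Let `μ` be a Borel measure on `ℂ` which is finite on compact sets, positive on nonempty open
sets, and vanishes on singletons. Let `f : (−1,1) → ℂ` be continuous such that images of
closed subintervals have nonempty interior, and closed subintervals with disjoint interiors
have images with disjoint interiors. Define `φ(t) = μ(f([0,t]))` for `t ≥ 0` and
`φ(t) = −μ(f([t,0]))` for `t < 0`. Then `φ` is strictly increasing and continuous
on `(−1,1)`. -/
theorem statement_16 (μ : Measure ℂ)
    (hfin : ∀ K : Set ℂ, IsCompact K → μ K < ⊤)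
    (hpos : ∀ U : Set ℂ, IsOpen U → U.Nonempty → 0 < μ U)
    (hsing : ∀ z : ℂ, μ {z} = 0)
    (f : ℝ → ℂ) (hf : ContinuousOn f (Set.Ioo (-1) 1))
    (hi : ∀ a b : ℝ, -1 < a → a < b → b < 1 → (interior (f '' Set.Icc a b)).Nonempty)
    (hii : ∀ a b c d : ℝ, -1 < a → a ≤ b → b < 1 → -1 < c → c ≤ d → d < 1 →
      Set.Ioo a b ∩ Set.Ioo c d = ∅ →
      interior (f '' Set.Icc a b) ∩ interior (f '' Set.Icc c d) = ∅)
    (φ : ℝ → ℝ)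
    (hφ0 : ∀ t : ℝ, 0 ≤ t → t < 1 → φ t = (μ (f '' Set.Icc 0 t)).toReal)
    (hφ1 : ∀ t : ℝ, -1 < t → t < 0 → φ t = -(μ (f '' Set.Icc t 0)).toReal) :
    StrictMonoOn φ (Set.Ioo (-1) 1) ∧ ContinuousOn φ (Set.Ioo (-1) 1) := by
  have hIccsub : ∀ a b : ℝ, -1 < a → b < 1 → Set.Icc a b ⊆ Set.Ioo (-1 : ℝ) 1 := by
    intro a b ha hb x hx
    exact ⟨lt_of_lt_of_le ha hx.1, lt_of_le_of_lt hx.2 hb⟩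
  have hcomp : ∀ a b : ℝ, -1 < a → b < 1 → IsCompact (f '' Set.Icc a b) := fun a b ha hb =>
    isCompact_Icc.image_of_continuousOn (hf.mono (hIccsub a b ha hb))
  have hne : ∀ a b : ℝ, -1 < a → b < 1 → μ (f '' Set.Icc a b) ≠ ⊤ := fun a b ha hb =>
    (hfin _ (hcomp a b ha hb)).ne
  -- disjointness of Ioo's
  have hIoo : ∀ a b c : ℝ, Set.Ioo a b ∩ Set.Ioo b c = ∅ := by
    intro a b c
    rw [Set.eq_empty_iff_forall_notMem]
    rintro x ⟨⟨_, h1⟩, ⟨h2, _⟩⟩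
    linarith
  -- growth on the right
  have grow_right : ∀ a b t : ℝ, -1 < a → a ≤ b → b < t → t < 1 →
      μ (f '' Set.Icc a b) < μ (f '' Set.Icc a t) := by
    intro a b t ha hab hbt ht
    have hb1 : b < 1 := hbt.trans ht
    have hb0 : -1 < b := lt_of_lt_of_le ha hab
    obtain ⟨v, hv⟩ := hi b t hb0 hbt ht
    have hdisj : interior (f '' Set.Icc a b) ∩ interior (f '' Set.Icc b t) = ∅ :=
      hii a b b t ha hab hb1 hb0 hbt.le ht (hIoo a b t)
    set V := interior (f '' Set.Icc b t) with hV
    have hVopen : IsOpen V := isOpen_interior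
    set W := V \ f '' Set.Icc a b with hW
    have hWopen : IsOpen W := hVopen.sdiff (hcomp a b ha hb1).isClosed
    have hWne : W.Nonempty := by
      by_contra hcon
      rw [Set.not_nonempty_iff_eq_empty, hW, Set.diff_eq_empty] at hcon
      have : V ⊆ interior (f '' Set.Icc a b) := interior_maximal hcon hVopen
      have : v ∈ interior (f '' Set.Icc a b) ∩ interior (f '' Set.Icc b t) := ⟨this hv, hv⟩
      rw [hdisj] at this
      exact this
    have hWpos : 0 < μ W := hpos W hWopen hWne
    calc μ (f '' Set.Icc a b) < μ (f '' Set.Icc a b) + μ W :=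
          ENNReal.lt_add_right (hne a b ha hb1) hWpos.ne'
      _ = μ (f '' Set.Icc a b ∪ W) :=
          (measure_union (Set.disjoint_sdiff_right) hWopen.measurableSet).symm
      _ ≤ μ (f '' Set.Icc a t) := by
          apply measure_mono
          apply Set.union_subset
          · exact Set.image_mono (Set.Icc_subset_Icc le_rfl hbt.le)
          · exact fun x hx => Set.image_mono (Set.Icc_subset_Icc hab le_rfl)
              (interior_subset hx.1)
  -- growth on the left
  have grow_left : ∀ s b c : ℝ, -1 < s → s < b → b ≤ c → c < 1 →
      μ (f '' Set.Icc b c) < μ (f '' Set.Icc s c) := by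
    intro s b c hs hsb hbc hc
    have hb1 : b < 1 := lt_of_le_of_lt hbc hc
    obtain ⟨v, hv⟩ := hi s b hs hsb hb1
    have hdisj : interior (f '' Set.Icc b c) ∩ interior (f '' Set.Icc s b) = ∅ := by
      apply hii b c s b (hsb.trans_le' (le_of_lt hs)) hbc hc hs hsb.le hb1
      rw [Set.inter_comm]
      exact hIoo s b c
    set V := interior (f '' Set.Icc s b) with hV
    have hVopen : IsOpen V := isOpen_interior
    set W := V \ f '' Set.Icc b c with hW
    have hWopen : IsOpen W := hVopen.sdiff (hcomp b c (hs.trans hsb) hc).isClosed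
    have hWne : W.Nonempty := by
      by_contra hcon
      rw [Set.not_nonempty_iff_eq_empty, hW, Set.diff_eq_empty] at hcon
      have : V ⊆ interior (f '' Set.Icc b c) := interior_maximal hcon hVopen
      have : v ∈ interior (f '' Set.Icc b c) ∩ interior (f '' Set.Icc s b) := ⟨this hv, hv⟩
      rw [hdisj] at this
      exact this
    have hWpos : 0 < μ W := hpos W hWopen hWne
    calc μ (f '' Set.Icc b c) < μ (f '' Set.Icc b c) + μ W :=
          ENNReal.lt_add_right (hne b c (hs.trans hsb) hc) hWpos.ne'
      _ = μ (f '' Set.Icc b c ∪ W) :=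
          (measure_union (Set.disjoint_sdiff_right) hWopen.measurableSet).symm
      _ ≤ μ (f '' Set.Icc s c) := by
          apply measure_mono
          apply Set.union_subset
          · exact Set.image_mono (Set.Icc_subset_Icc hsb.le le_rfl)
          · exact fun x hx => Set.image_mono (Set.Icc_subset_Icc le_rfl hbc)
              (interior_subset hx.1)
  -- strict monotonicity
  have hmono : StrictMonoOn φ (Set.Ioo (-1 : ℝ) 1) := by
    intro s hs t ht hst
    rcases le_or_gt 0 s with h0s | hs0
    · rw [hφ0 s h0s hs.2, hφ0 t (h0s.trans hst.le) ht.2]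
      exact (ENNReal.toReal_lt_toReal (hne 0 s (by norm_num) hs.2)
        (hne 0 t (by norm_num) ht.2)).mpr (grow_right 0 s t (by norm_num) h0s hst ht.2)
    · rcases lt_or_ge t 0 with ht0 | h0t
      · rw [hφ1 s hs.1 hs0, hφ1 t ht.1 ht0]
        have h1 := grow_left s t 0 hs.1 hst ht0.le one_pos
        have h2 := (ENNReal.toReal_lt_toReal (hne t 0 ht.1 one_pos)
          (hne s 0 hs.1 one_pos)).mpr h1
        linarith
      · have hφs : φ s < 0 := by
          rw [hφ1 s hs.1 hs0]
          have hVpos : 0 < μ (f '' Set.Icc s 0) :=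
            lt_of_lt_of_le (hpos _ isOpen_interior (hi s 0 hs.1 hs0 one_pos))
              (measure_mono interior_subset)
          have := ENNReal.toReal_pos hVpos.ne' (hne s 0 hs.1 one_pos)
          linarith
        have hφt : 0 ≤ φ t := by rw [hφ0 t h0t ht.2]; exact ENNReal.toReal_nonneg
        linarith
  refine ⟨hmono, ?_⟩
  -- φ at nonpositive points, uniform formula
  have hφ1' : ∀ t : ℝ, -1 < t → t ≤ 0 → φ t = -(μ (f '' Set.Icc t 0)).toReal := by
    intro t ht1 ht0
    rcases lt_or_eq_of_le ht0 with h | h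
    · exact hφ1 t ht1 h
    · subst h
      rw [hφ0 0 le_rfl one_pos]
      simp [Set.Icc_self, hsing]
  -- intersections of shrinking images
  have hInter : ∀ (a b : ℕ → ℝ) (t : ℝ), -1 < t → t < 1 →
      (∀ n, -1 < a n) → (∀ n, a n ≤ t) → (∀ n, t ≤ b n) → (∀ n, b n < 1) →
      Tendsto a atTop (nhds t) → Tendsto b atTop (nhds t) →
      (⋂ n, f '' Set.Icc (a n) (b n)) = {f t} := by
    intro a b t ht1 ht2 ha1 ha2 hb1 hb2 hta htb
    ext z
    simp only [Set.mem_iInter, Set.mem_singleton_iff]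
    constructor
    · intro hz
      choose x hx hfx using hz
      have hxt : Tendsto x atTop (nhds t) :=
        tendsto_of_tendsto_of_tendsto_of_le_of_le hta htb (fun n => (hx n).1) (fun n => (hx n).2)
      have hxI : ∀ n, x n ∈ Set.Ioo (-1 : ℝ) 1 := fun n =>
        ⟨lt_of_lt_of_le (ha1 n) (hx n).1, lt_of_le_of_lt (hx n).2 (hb2 n)⟩
      have hxt' : Tendsto x atTop (nhdsWithin t (Set.Ioo (-1 : ℝ) 1)) :=
        tendsto_nhdsWithin_iff.mpr ⟨hxt, Filter.Eventually.of_forall hxI⟩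
      have hft : Tendsto (fun n => f (x n)) atTop (nhds (f t)) :=
        (hf t ⟨ht1, ht2⟩).tendsto.comp hxt'
      have hzc : Tendsto (fun _ : ℕ => z) atTop (nhds (f t)) := by
        simpa only [hfx] using hft
      exact tendsto_nhds_unique tendsto_const_nhds hzc
    · rintro rfl n
      exact ⟨t, ⟨ha2 n, hb1 n⟩, rfl⟩
  -- shrinking measure on the right
  have shrink_right : ∀ t c ε : ℝ, -1 < t → 0 < c → t + c < 1 → 0 < ε →
      ∃ s, t < s ∧ s ≤ t + c ∧ (μ (f '' Set.Icc t s)).toReal < ε := by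
    intro t c ε ht1 hc htc hε
    set b : ℕ → ℝ := fun n => t + c / (n + 1) with hb
    have hbgt : ∀ n : ℕ, t < b n := by
      intro n
      have : 0 < c / ((n : ℝ) + 1) := div_pos hc (by positivity)
      simp only [hb]; linarith
    have hble : ∀ n : ℕ, b n ≤ t + c := by
      intro n
      have : c / ((n : ℝ) + 1) ≤ c := by
        apply div_le_self hc.le
        have : (0 : ℝ) ≤ (n : ℝ) := Nat.cast_nonneg n
        linarith
      simp only [hb]; linarith
    have hb1 : ∀ n, b n < 1 := fun n => lt_of_le_of_lt (hble n) htc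
    have htb : Tendsto b atTop (nhds t) := by
      have h0 : Tendsto (fun n : ℕ => c * (1 / ((n : ℝ) + 1))) atTop (nhds (c * 0)) :=
        tendsto_one_div_add_atTop_nhds_zero_nat.const_mul c
      have h1 : Tendsto (fun n : ℕ => t + c * (1 / ((n : ℝ) + 1))) atTop (nhds (t + c * 0)) :=
        tendsto_const_nhds.add h0
      simpa [hb, div_eq_mul_inv] using h1
    have hanti : Antitone (fun n : ℕ => f '' Set.Icc t (b n)) := by
      intro n m hnm
      apply Set.image_mono
      apply Set.Icc_subset_Icc le_rfl
      simp only [hb]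
      have : c / ((m : ℝ) + 1) ≤ c / ((n : ℝ) + 1) := by
        apply div_le_div_of_nonneg_left hc.le (by positivity)
        have : (n : ℝ) ≤ (m : ℝ) := Nat.cast_le.mpr hnm
        linarith
      linarith
    have hI : (⋂ n, f '' Set.Icc t (b n)) = {f t} :=
      hInter (fun _ => t) b t ht1 (htc.trans_le' (by linarith)) (fun _ => ht1) (fun _ => le_rfl)
        (fun n => (hbgt n).le) hb1 tendsto_const_nhds htb
    have htend : Tendsto (fun n => μ (f '' Set.Icc t (b n))) atTop (nhds 0) := by
      have := tendsto_measure_iInter_atTop (μ := μ) (s := fun n : ℕ => f '' Set.Icc t (b n))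
        (fun n => (hcomp t (b n) ht1 (hb1 n)).isClosed.measurableSet.nullMeasurableSet)
        hanti ⟨0, hne t (b 0) ht1 (hb1 0)⟩
      rw [hI] at this
      simpa [hsing, Function.comp_def] using this
    have htend' : Tendsto (fun n => (μ (f '' Set.Icc t (b n))).toReal) atTop (nhds 0) := by
      have h0 : Tendsto ENNReal.toReal (nhds (0 : ENNReal)) (nhds ((0 : ENNReal)).toReal) :=
        ENNReal.tendsto_toReal (by simp)
      simpa [Function.comp_def] using h0.comp htend
    obtain ⟨n, hn⟩ := (htend'.eventually (gt_mem_nhds hε)).exists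
    exact ⟨b n, hbgt n, hble n, hn⟩
  -- shrinking measure on the left
  have shrink_left : ∀ t c ε : ℝ, t < 1 → 0 < c → -1 < t - c → 0 < ε →
      ∃ s, t - c ≤ s ∧ s < t ∧ (μ (f '' Set.Icc s t)).toReal < ε := by
    intro t c ε ht1 hc htc hε
    set a : ℕ → ℝ := fun n => t - c / (n + 1) with ha
    have halt : ∀ n : ℕ, a n < t := by
      intro n
      have : 0 < c / ((n : ℝ) + 1) := div_pos hc (by positivity)
      simp only [ha]; linarith
    have hage : ∀ n : ℕ, t - c ≤ a n := by
      intro n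
      have : c / ((n : ℝ) + 1) ≤ c := by
        apply div_le_self hc.le
        have : (0 : ℝ) ≤ (n : ℝ) := Nat.cast_nonneg n
        linarith
      simp only [ha]; linarith
    have ha1 : ∀ n, -1 < a n := fun n => lt_of_lt_of_le htc (hage n)
    have hta : Tendsto a atTop (nhds t) := by
      have h0 : Tendsto (fun n : ℕ => c * (1 / ((n : ℝ) + 1))) atTop (nhds (c * 0)) :=
        tendsto_one_div_add_atTop_nhds_zero_nat.const_mul c
      have h1 : Tendsto (fun n : ℕ => t - c * (1 / ((n : ℝ) + 1))) atTop (nhds (t - c * 0)) :=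
        tendsto_const_nhds.sub h0
      simpa [ha, div_eq_mul_inv] using h1
    have hanti : Antitone (fun n : ℕ => f '' Set.Icc (a n) t) := by
      intro n m hnm
      apply Set.image_mono
      apply Set.Icc_subset_Icc _ le_rfl
      simp only [ha]
      have : c / ((m : ℝ) + 1) ≤ c / ((n : ℝ) + 1) := by
        apply div_le_div_of_nonneg_left hc.le (by positivity)
        have : (n : ℝ) ≤ (m : ℝ) := Nat.cast_le.mpr hnm
        linarith
      linarith
    have hI : (⋂ n, f '' Set.Icc (a n) t) = {f t} :=
      hInter a (fun _ => t) t (htc.trans_le (by linarith)) ht1 ha1 (fun n => (halt n).le)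
        (fun _ => le_rfl) (fun _ => ht1) hta tendsto_const_nhds
    have htend : Tendsto (fun n => μ (f '' Set.Icc (a n) t)) atTop (nhds 0) := by
      have := tendsto_measure_iInter_atTop (μ := μ) (s := fun n : ℕ => f '' Set.Icc (a n) t)
        (fun n => (hcomp (a n) t (ha1 n) ht1).isClosed.measurableSet.nullMeasurableSet)
        hanti ⟨0, hne (a 0) t (ha1 0) ht1⟩
      rw [hI] at this
      simpa [hsing, Function.comp_def] using this
    have htend' : Tendsto (fun n => (μ (f '' Set.Icc (a n) t)).toReal) atTop (nhds 0) := by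
      have h0 : Tendsto ENNReal.toReal (nhds (0 : ENNReal)) (nhds ((0 : ENNReal)).toReal) :=
        ENNReal.tendsto_toReal (by simp)
      simpa [Function.comp_def] using h0.comp htend
    obtain ⟨n, hn⟩ := (htend'.eventually (gt_mem_nhds hε)).exists
    exact ⟨a n, hage n, halt n, hn⟩
  -- subadditivity in toReal
  have tri : ∀ a b c : ℝ, -1 < a → a ≤ b → b ≤ c → c < 1 →
      (μ (f '' Set.Icc a c)).toReal ≤
        (μ (f '' Set.Icc a b)).toReal + (μ (f '' Set.Icc b c)).toReal := by
    intro a b c ha hab hbc hc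
    have hb1 : b < 1 := lt_of_le_of_lt hbc hc
    have hb0 : -1 < b := lt_of_lt_of_le ha hab
    have h1 : f '' Set.Icc a c ⊆ f '' Set.Icc a b ∪ f '' Set.Icc b c := by
      rw [← Set.image_union, Set.Icc_union_Icc_eq_Icc hab hbc]
    have h2 : μ (f '' Set.Icc a c) ≤ μ (f '' Set.Icc a b) + μ (f '' Set.Icc b c) :=
      le_trans (measure_mono h1) (measure_union_le _ _)
    have h3 := ENNReal.toReal_mono
      (ENNReal.add_ne_top.mpr ⟨hne a b ha hb1, hne b c hb0 hc⟩) h2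
    rwa [ENNReal.toReal_add (hne a b ha hb1) (hne b c hb0 hc)] at h3
  -- gap bound for consecutive points on the same side of 0
  have gap : ∀ u v : ℝ, -1 < u → u < v → v < 1 → (0 ≤ u ∨ v ≤ 0) →
      φ v - φ u ≤ (μ (f '' Set.Icc u v)).toReal := by
    intro u v hu huv hv hside
    rcases hside with h0u | hv0
    · rw [hφ0 u h0u (huv.trans hv), hφ0 v (h0u.trans huv.le) hv]
      have := tri 0 u v (by norm_num) h0u huv.le hv
      linarith
    · rw [hφ1' u hu (huv.le.trans hv0), hφ1' v (hu.trans huv) hv0]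
      have := tri u v 0 hu huv.le hv0 one_pos
      linarith
  -- continuity
  intro t ht
  rw [Metric.continuousWithinAt_iff]
  intro ε hε
  have hR : ∃ s₂, t < s₂ ∧ s₂ < 1 ∧ φ s₂ - φ t < ε := by
    rcases le_or_gt 0 t with h0t | ht0
    · obtain ⟨s, hts, hsle, hμ⟩ := shrink_right t ((1 - t) / 2) ε ht.1
        (by linarith [ht.2]) (by linarith [ht.2]) hε
      have hs1 : s < 1 := by linarith [ht.2]
      refine ⟨s, hts, hs1, ?_⟩
      have := gap t s ht.1 hts hs1 (Or.inl h0t)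
      linarith
    · obtain ⟨s, hts, hsle, hμ⟩ := shrink_right t (-t / 2) ε ht.1 (by linarith) (by linarith) hε
      have hs0 : s ≤ 0 := by linarith
      have hs1 : s < 1 := by linarith
      refine ⟨s, hts, hs1, ?_⟩
      have := gap t s ht.1 hts hs1 (Or.inr hs0)
      linarith
  have hL : ∃ s₁, -1 < s₁ ∧ s₁ < t ∧ φ t - φ s₁ < ε := by
    rcases le_or_gt t 0 with ht0 | h0t
    · obtain ⟨s, hsle, hst, hμ⟩ := shrink_left t ((t + 1) / 2) ε ht.2
        (by linarith [ht.1]) (by linarith [ht.1]) hε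
      have hs1 : -1 < s := by linarith [ht.1]
      refine ⟨s, hs1, hst, ?_⟩
      have := gap s t hs1 hst ht.2 (Or.inr ht0)
      linarith
    · obtain ⟨s, hsle, hst, hμ⟩ := shrink_left t (t / 2) ε ht.2 (by linarith) (by linarith) hε
      have hs0 : 0 ≤ s := by linarith
      have hs1 : -1 < s := by linarith
      refine ⟨s, hs1, hst, ?_⟩
      have := gap s t hs1 hst ht.2 (Or.inl hs0)
      linarith
  obtain ⟨s₂, h1, h2, h3⟩ := hR
  obtain ⟨s₁, g1, g2, g3⟩ := hL
  refine ⟨min (t - s₁) (s₂ - t), lt_min (by linarith) (by linarith), ?_⟩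
  intro y hy hdist
  rw [Real.dist_eq] at hdist ⊢
  have hd1 : |y - t| < t - s₁ := lt_of_lt_of_le hdist (min_le_left _ _)
  have hd2 : |y - t| < s₂ - t := lt_of_lt_of_le hdist (min_le_right _ _)
  rw [abs_lt] at hd1 hd2
  have hmon := hmono.monotoneOn
  have hs₁I : s₁ ∈ Set.Ioo (-1 : ℝ) 1 := ⟨g1, g2.trans ht.2⟩
  have hs₂I : s₂ ∈ Set.Ioo (-1 : ℝ) 1 := ⟨ht.1.trans h1, h2⟩
  have hly : φ s₁ ≤ φ y := hmon hs₁I hy (by linarith [hd1.1])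
  have hyr : φ y ≤ φ s₂ := hmon hy hs₂I (by linarith [hd2.2])
  have hlt : φ s₁ ≤ φ t := hmon hs₁I ht g2.le
  have htr : φ t ≤ φ s₂ := hmon ht hs₂I h1.le
  rw [abs_lt]
  constructor <;> linarith
end
end
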